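/- arXiv:0811.4773 — 11 statements merged into one kernel-verified Lean document; each statement's English description precedes it below -/
import Mathlib

section
/- Let X_1, ..., X_N be random variables taking values in finite alphabets whose joint probability mass function factors as p(x^N) = \prod_{i=1}^K f_i(x_{S_i}) for nonnegative functions f_1,...,f_K, where each S_i is a subset of {1,...,N} and x_{S_i} denotes the coordinates indexed by S_i. Form the undirected graph G on vertex set {1,...,N} with an edge between j and j' (j ≠ j') if and only if some S_i contains both j and j'. Let G_1, G_2, G_3 be pairwise disjoint subsets of {1,...,N} such that every path in G from a vertex of G_1 to a vertex of G_3 passes through a vertex of G_2. Then X_{G_1} and X_{G_3} are conditionally independent given X_{G_2}, i.e., the Markov chain X_{G_1} - X_{G_2} - X_{G_3} holds. -/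
open Finset

/-- The "marginal probability" that the coordinates in `S` take the values prescribed
by `x`, for a joint pmf `p` on a finite product alphabet. -/
noncomputable def eventProb {N : ℕ} {α : Fin N → Type*} [∀ j, Fintype (α j)]
    [∀ j, DecidableEq (α j)]
    (p : (∀ j, α j) → ℝ) (S : Finset (Fin N)) (x : ∀ j, α j) : ℝ :=
  ∑ y : ∀ j, α j, if ∀ j ∈ S, y j = x j then p y else 0

/-!
Let `T` consist of `G₂` together with every vertex reachable from `G₁` by a walk avoiding `G₂`.
Then `G₁ ∪ G₂ ⊆ T`, `G₃` misses `T`, and every edge leaving `T` starts in `G₂`. Each `S i` is a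
clique of `G`, so it lies either in `T` or in `Tᶜ ∪ G₂`; grouping the factors accordingly
writes `p = g * h` with `g` depending only on the coordinates in `T` and `h` only on those in
`Tᶜ ∪ G₂`. For such a `p`, the bijection `(y, z) ↦ (y on T and z off T, z on T and y off T)` of
pairs of configurations matches the terms of the two sides of the cross-multiplied identity,
because `y` and `z` agree on `G₂` whenever they contribute.
-/

open Function

section Coordinates

variable {ι : Type*} {α : ι → Type*}

theorem DependsOn.finset_prod {κ M : Type*} [CommMonoid M] {s : Finset κ}
    {f : κ → (Π j, α j) → M} {U : Set ι} (hf : ∀ i ∈ s, DependsOn (f i) U) :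
    DependsOn (fun x => ∏ i ∈ s, f i x) U :=
  fun _ _ hxy => Finset.prod_congr rfl fun i hi => hf i hi hxy

theorem exists_mul_dependsOn_of_prod {κ M : Type*} [CommMonoid M] (s : Finset κ)
    {f : κ → (Π j, α j) → M} {S : κ → Set ι} (hf : ∀ i, DependsOn (f i) (S i)) {U V : Set ι}
    (hUV : ∀ i, S i ⊆ U ∨ S i ⊆ V) :
    ∃ g h : (Π j, α j) → M, DependsOn g U ∧ DependsOn h V ∧ ∀ x, ∏ i ∈ s, f i x = g x * h x := by
  classical
  refine ⟨fun x => ∏ i ∈ s with S i ⊆ U, f i x, fun x => ∏ i ∈ s with ¬S i ⊆ U, f i x,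
    DependsOn.finset_prod fun i hi => (hf i).mono (Finset.mem_filter.1 hi).2,
    DependsOn.finset_prod fun i hi => (hf i).mono ((hUV i).resolve_left (Finset.mem_filter.1 hi).2),
    fun x => (Finset.prod_filter_mul_prod_filter_not s _ _).symm⟩

variable {T : Set ι} [DecidablePred (· ∈ T)] {y z : Π j, α j}

theorem DependsOn.piecewise_eq_left {β : Type*} {g : (Π j, α j) → β} (hg : DependsOn g T) :
    g (T.piecewise y z) = g y :=
  hg fun _ hj => Set.piecewise_eq_of_mem _ _ _ hj

theorem DependsOn.piecewise_eq_right {β : Type*} {h : (Π j, α j) → β} {B : Set ι}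
    (hh : DependsOn h (Tᶜ ∪ B)) (hyz : ∀ j ∈ B, y j = z j) : h (T.piecewise y z) = h z :=
  hh fun j hj => by
    by_cases hjT : j ∈ T
    · rw [Set.piecewise_eq_of_mem _ _ _ hjT]
      exact hyz j (hj.resolve_left (not_not.2 hjT))
    · exact Set.piecewise_eq_of_notMem _ _ _ hjT

theorem forall_piecewise_eq_iff_of_subset {S : Finset ι} (hS : ↑S ⊆ T) (x : Π j, α j) :
    (∀ j ∈ S, T.piecewise y z j = x j) ↔ ∀ j ∈ S, y j = x j :=
  forall₂_congr fun _ hj => by rw [Set.piecewise_eq_of_mem _ _ _ (hS hj)]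

theorem forall_piecewise_eq_iff_of_disjoint {S : Finset ι} (hS : Disjoint (↑S) T)
    (x : Π j, α j) : (∀ j ∈ S, T.piecewise y z j = x j) ↔ ∀ j ∈ S, z j = x j :=
  forall₂_congr fun _ hj => by
    rw [Set.piecewise_eq_of_notMem _ _ _ (hS.notMem_of_mem_left (Finset.mem_coe.2 hj))]

variable (T) in
def swapOutside : (Π j, α j) × (Π j, α j) → (Π j, α j) × (Π j, α j) :=
  fun yz => (T.piecewise yz.1 yz.2, T.piecewise yz.2 yz.1)

variable (T) in
theorem swapOutside_involutive : Involutive (swapOutside (α := α) T) := by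
  rintro ⟨y, z⟩
  ext j <;> by_cases hj : j ∈ T <;> simp [swapOutside, hj]

end Coordinates

theorem eventProb_cross_mul_of_dependsOn {N : ℕ} {α : Fin N → Type*} [∀ j, Fintype (α j)]
    [∀ j, DecidableEq (α j)] {p g h : (Π j, α j) → ℝ} (hp : ∀ y, p y = g y * h y)
    {T : Set (Fin N)} {A B C : Finset (Fin N)} (hg : DependsOn g T) (hh : DependsOn h (Tᶜ ∪ B))
    (hA : ↑A ⊆ T) (hB : ↑B ⊆ T) (hC : Disjoint (↑C) T) (x : Π j, α j) :
    eventProb p (A ∪ B ∪ C) x * eventProb p B x =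
      eventProb p (A ∪ B) x * eventProb p (B ∪ C) x := by
  classical
  simp only [eventProb, Fintype.sum_mul_sum, ← Fintype.sum_prod_type']
  refine Fintype.sum_equiv (swapOutside_involutive T).toPerm _ _ fun ⟨y, z⟩ => ?_
  rw [ite_zero_mul_ite_zero, ite_zero_mul_ite_zero]
  have hcond : ((∀ j ∈ A ∪ B ∪ C, y j = x j) ∧ ∀ j ∈ B, z j = x j) ↔
      (∀ j ∈ A ∪ B, T.piecewise y z j = x j) ∧ ∀ j ∈ B ∪ C, T.piecewise z y j = x j := by
    simp only [Finset.forall_mem_union]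
    rw [forall_piecewise_eq_iff_of_subset hA, forall_piecewise_eq_iff_of_subset hB,
      forall_piecewise_eq_iff_of_subset hB, forall_piecewise_eq_iff_of_disjoint hC]
    tauto
  refine if_ctx_congr hcond (fun hyz => ?_) fun _ => rfl
  obtain ⟨hy, hz⟩ := hcond.2 hyz
  have hyz_B : ∀ j ∈ B, y j = z j := fun j hj =>
    (hy j (Finset.mem_union_left _ (Finset.mem_union_right _ hj))).trans (hz j hj).symm
  change p y * p z = p (T.piecewise y z) * p (T.piecewise z y)
  rw [hp, hp, hp, hp, hg.piecewise_eq_left, hg.piecewise_eq_left,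
    hh.piecewise_eq_right hyz_B, hh.piecewise_eq_right fun j hj => (hyz_B j hj).symm]
  ring

namespace SimpleGraph

variable {V : Type*} {G : SimpleGraph V}

theorem exists_closed_of_separates {A B C : Set V} (hAB : Disjoint A B) (hBC : Disjoint B C)
    (hsep : ∀ u ∈ A, ∀ v ∈ C, ∀ w : G.Walk u v, ∃ j ∈ w.support, j ∈ B) :
    ∃ T : Set V, A ⊆ T ∧ B ⊆ T ∧ Disjoint T C ∧
      ∀ a b, G.Adj a b → a ∈ T → a ∉ B → b ∈ T := by
  refine ⟨B ∪ {v | ∃ u ∈ A, ∃ w : G.Walk u v, ∀ j ∈ w.support, j ∉ B}, fun u hu => ?_,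
    Set.subset_union_left, ?_, ?_⟩
  · refine Or.inr ⟨u, hu, .nil, fun j hj => ?_⟩
    rw [Walk.support_nil, List.mem_singleton] at hj
    exact hj ▸ hAB.notMem_of_mem_left hu
  · refine Set.disjoint_union_left.2 ⟨hBC, Set.disjoint_left.2 ?_⟩
    rintro v ⟨u, hu, w, hw⟩ hv
    obtain ⟨j, hj, hjB⟩ := hsep u hu v hv w
    exact hw j hj hjB
  · rintro a b hab (ha | ⟨u, hu, w, hw⟩) haB
    · exact absurd ha haB
    by_cases hbB : b ∈ B
    · exact Or.inl hbB
    refine Or.inr ⟨u, hu, w.concat hab, fun j hj => ?_⟩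
    rw [Walk.support_concat, List.mem_append, List.mem_singleton] at hj
    exact hj.elim (hw j) fun h => h ▸ hbB

theorem IsClique.subset_or_subset_compl_union {s T B : Set V} (hs : G.IsClique s)
    (hT : ∀ a b, G.Adj a b → a ∈ T → a ∉ B → b ∈ T) : s ⊆ T ∨ s ⊆ Tᶜ ∪ B := by
  by_contra! h
  obtain ⟨b, hbs, hbT⟩ := Set.not_subset.1 h.1
  obtain ⟨a, has, haTB⟩ := Set.not_subset.1 h.2
  simp only [Set.mem_union, Set.mem_compl_iff, not_or, not_not] at haTB
  exact hbT (hT a b (hs has hbs fun hab => hbT (hab ▸ haTB.1)) haTB.1 haTB.2)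

end SimpleGraph

theorem graph_technique_markov_general
    {N : ℕ} {α : Fin N → Type*} [∀ j, Fintype (α j)] [∀ j, DecidableEq (α j)]
    {K : ℕ} (S : Fin K → Finset (Fin N)) (f : Fin K → (∀ j, α j) → ℝ)
    (hdep : ∀ i x y, (∀ j ∈ S i, x j = y j) → f i x = f i y)
    (p : (∀ j, α j) → ℝ)
    (hfac : ∀ x, p x = ∏ i, f i x)
    (G : SimpleGraph (Fin N))
    (hG : ∀ j j', G.Adj j j' ↔ j ≠ j' ∧ ∃ i, j ∈ S i ∧ j' ∈ S i)
    (G₁ G₂ G₃ : Finset (Fin N))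
    (h12 : Disjoint G₁ G₂) (h23 : Disjoint G₂ G₃)
    (hsep : ∀ u ∈ G₁, ∀ v ∈ G₃, ∀ w : G.Walk u v, ∃ j ∈ w.support, j ∈ G₂) :
    ∀ x : ∀ j, α j,
      eventProb p (G₁ ∪ G₂ ∪ G₃) x * eventProb p G₂ x =
        eventProb p (G₁ ∪ G₂) x * eventProb p (G₂ ∪ G₃) x := by
  obtain ⟨T, hG₁T, hG₂T, hTG₃, hT⟩ := SimpleGraph.exists_closed_of_separates
    (Finset.disjoint_coe.2 h12) (Finset.disjoint_coe.2 h23) hsep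
  have hclique (i : Fin K) : G.IsClique (S i : Set (Fin N)) :=
    fun a ha b hb hab => (hG a b).2 ⟨hab, i, ha, hb⟩
  obtain ⟨g, h, hg, hh, hgh⟩ := exists_mul_dependsOn_of_prod Finset.univ
    (fun i _ _ hxy => hdep i _ _ hxy) fun i => (hclique i).subset_or_subset_compl_union hT
  exact eventProb_cross_mul_of_dependsOn (fun y => (hfac y).trans (hgh y)) hg hh hG₁T hG₂T
    hTG₃.symm

/-- Suppose the joint pmf of `X_1, ..., X_N` factors as a product of
nonnegative functions `f_i`, where `f_i` depends only on the coordinates in `S_i`.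
Form the undirected graph `G` on `{1,...,N}` with an edge between distinct `j, j'` iff
some `S_i` contains both.  If `G₁, G₂, G₃` are pairwise disjoint vertex sets such that
every path (walk) in `G` from `G₁` to `G₃` passes through a vertex of `G₂`, then
`X_{G₁}` and `X_{G₃}` are conditionally independent given `X_{G₂}` (stated in the
cross-multiplication form `p(x_{G₁},x_{G₂},x_{G₃}) p(x_{G₂}) = p(x_{G₁},x_{G₂}) p(x_{G₂},x_{G₃})`). -/
theorem graph_technique_markov
    {N : ℕ} {α : Fin N → Type*} [∀ j, Fintype (α j)] [∀ j, DecidableEq (α j)]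
    {K : ℕ} (S : Fin K → Finset (Fin N)) (f : Fin K → (∀ j, α j) → ℝ)
    (hf0 : ∀ i x, 0 ≤ f i x)
    (hdep : ∀ i x y, (∀ j ∈ S i, x j = y j) → f i x = f i y)
    (p : (∀ j, α j) → ℝ)
    (hfac : ∀ x, p x = ∏ i, f i x)
    (hp1 : ∑ x, p x = 1)
    (G : SimpleGraph (Fin N))
    (hG : ∀ j j', G.Adj j j' ↔ j ≠ j' ∧ ∃ i, j ∈ S i ∧ j' ∈ S i)
    (G₁ G₂ G₃ : Finset (Fin N))
    (h12 : Disjoint G₁ G₂) (h13 : Disjoint G₁ G₃) (h23 : Disjoint G₂ G₃)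
    (hsep : ∀ u ∈ G₁, ∀ v ∈ G₃, ∀ w : G.Walk u v, ∃ j ∈ w.support, j ∈ G₂) :
    ∀ x : ∀ j, α j,
      eventProb p (G₁ ∪ G₂ ∪ G₃) x * eventProb p G₂ x =
        eventProb p (G₁ ∪ G₂) x * eventProb p (G₂ ∪ G₃) x :=
  graph_technique_markov_general S f hdep p hfac G hG G₁ G₂ G₃ h12 h23 hsep
end

section
/- Let X, Y, Z, U, V, W be random variables taking values in finite alphabets whose joint probability mass function factors as p(x,y,z,u,v,w) = p(x,y) p(z|x) p(u|y) p(v|u,z) p(w|u,v,x,y). Then the Markov chain W - (X,U,V) - Z holds, i.e., W and Z are conditionally independent given the triple (X,U,V). -/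
open scoped Classical
open Finset

/-- Conditional independence of `A` and `C` given `B` for a pmf `P` on a finite sample
space, in cross-multiplication form: `P(A=a,B=b,C=c) P(B=b) = P(A=a,B=b) P(B=b,C=c)`. -/
def CondIndepPmf {Ω α β γ : Type*} [Fintype Ω]
    (P : Ω → ℝ) (A : Ω → α) (B : Ω → β) (C : Ω → γ) : Prop :=
  ∀ (a : α) (b : β) (c : γ),
    (∑ ω, if A ω = a ∧ B ω = b ∧ C ω = c then P ω else 0) *
      (∑ ω, if B ω = b then P ω else 0) =
    (∑ ω, if A ω = a ∧ B ω = b then P ω else 0) *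
      (∑ ω, if B ω = b ∧ C ω = c then P ω else 0)

/-- If the joint pmf of `(X,Y,Z,U,V,W)` factors as
`p(x,y) p(z|x) p(u|y) p(v|u,z) p(w|u,v,x,y)`, then the Markov chain `W - (X,U,V) - Z`
holds. -/
theorem markov_W_XUV_Z
    {𝒳 𝒴 𝒵 𝒰 𝒱 𝒲 : Type*}
    [Fintype 𝒳] [Fintype 𝒴] [Fintype 𝒵] [Fintype 𝒰] [Fintype 𝒱] [Fintype 𝒲]
    (a : 𝒳 → 𝒴 → ℝ) (pz : 𝒳 → 𝒵 → ℝ) (pu : 𝒴 → 𝒰 → ℝ)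
    (pv : 𝒰 → 𝒵 → 𝒱 → ℝ) (pw : 𝒰 → 𝒱 → 𝒳 → 𝒴 → 𝒲 → ℝ)
    (ha0 : ∀ x y, 0 ≤ a x y) (ha1 : ∑ x, ∑ y, a x y = 1)
    (hz0 : ∀ x z, 0 ≤ pz x z) (hz1 : ∀ x, ∑ z, pz x z = 1)
    (hu0 : ∀ y u, 0 ≤ pu y u) (hu1 : ∀ y, ∑ u, pu y u = 1)
    (hv0 : ∀ u z v, 0 ≤ pv u z v) (hv1 : ∀ u z, ∑ v, pv u z v = 1)
    (hw0 : ∀ u v x y w, 0 ≤ pw u v x y w) (hw1 : ∀ u v x y, ∑ w, pw u v x y w = 1) :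
    CondIndepPmf
      (fun ω : 𝒳 × 𝒴 × 𝒵 × 𝒰 × 𝒱 × 𝒲 =>
        a ω.1 ω.2.1 * pz ω.1 ω.2.2.1 * pu ω.2.1 ω.2.2.2.1 *
          pv ω.2.2.2.1 ω.2.2.1 ω.2.2.2.2.1 *
          pw ω.2.2.2.1 ω.2.2.2.2.1 ω.1 ω.2.1 ω.2.2.2.2.2)
      (fun ω => ω.2.2.2.2.2)                          -- W
      (fun ω => (ω.1, ω.2.2.2.1, ω.2.2.2.2.1))        -- (X, U, V)
      (fun ω => ω.2.2.1) :=                           -- Z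
  by
  intro w0 b z0
  obtain ⟨x0, u0, v0⟩ := b
  simp only [CondIndepPmf, Fintype.sum_prod_type, Prod.mk.injEq, ite_and,
    Finset.sum_ite_irrel, Finset.sum_const_zero, Finset.sum_ite_eq',
    Finset.mem_univ, if_true]
  have h1 : (∑ y, a x0 y * pz x0 z0 * pu y u0 * pv u0 z0 v0 * pw u0 v0 x0 y w0)
      = (pz x0 z0 * pv u0 z0 v0) * ∑ y, a x0 y * pu y u0 * pw u0 v0 x0 y w0 := by
    rw [Finset.mul_sum]; exact Finset.sum_congr rfl fun y _ => by ring
  have h2 : (∑ y, ∑ z, ∑ w, a x0 y * pz x0 z * pu y u0 * pv u0 z v0 * pw u0 v0 x0 y w)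
      = (∑ y, a x0 y * pu y u0) * ∑ z, pz x0 z * pv u0 z v0 := by
    rw [Finset.sum_mul_sum]
    refine Finset.sum_congr rfl fun y _ => Finset.sum_congr rfl fun z _ => ?_
    rw [← Finset.mul_sum, hw1, mul_one]; ring
  have h3 : (∑ y, ∑ z, a x0 y * pz x0 z * pu y u0 * pv u0 z v0 * pw u0 v0 x0 y w0)
      = (∑ y, a x0 y * pu y u0 * pw u0 v0 x0 y w0) * ∑ z, pz x0 z * pv u0 z v0 := by
    rw [Finset.sum_mul_sum]
    exact Finset.sum_congr rfl fun y _ => Finset.sum_congr rfl fun z _ => by ring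
  have h4 : (∑ y, ∑ w, a x0 y * pz x0 z0 * pu y u0 * pv u0 z0 v0 * pw u0 v0 x0 y w)
      = (pz x0 z0 * pv u0 z0 v0) * ∑ y, a x0 y * pu y u0 := by
    rw [Finset.mul_sum]
    refine Finset.sum_congr rfl fun y _ => ?_
    rw [← Finset.mul_sum, hw1, mul_one]; ring
  rw [h1, h2, h3, h4]; ring
end

section
/- Let X, Y, Z, U, V, W take values in finite alphabets and let p̄(x,y,z,u,v,w) = p(x,y) p(z|x) p(u|y) p(v|u,z) p̄(w|u,v,x,y) be a joint probability mass function, where p̄(w|u,v,x) denotes the conditional pmf of W given (U,V,X) induced by p̄. Define a new joint pmf p(x,y,z,u,v,w) = p(x,y) p(z|x) p(u|y) p(v|u,z) p̄(w|u,v,x). Then the marginal distribution of (X,Y,Z,U,V) under p equals that under p̄, and the marginal distribution of (X,Z,U,V,W) under p equals that under p̄. -/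
open Finset

/-- Let `p̄(x,y,z,u,v,w) = p(x,y) p(z|x) p(u|y) p(v|u,z) p̄(w|u,v,x,y)`
be a joint pmf on finite alphabets, and let `c(u,v,x,w) = p̄(w|u,v,x)` be the conditional
pmf of `W` given `(U,V,X)` induced by `p̄`.  Define the new joint pmf
`p(x,y,z,u,v,w) = p(x,y) p(z|x) p(u|y) p(v|u,z) p̄(w|u,v,x)`.  Then the `(X,Y,Z,U,V)`
marginals of `p` and `p̄` coincide, and the `(X,Z,U,V,W)` marginals of `p` and `p̄`
coincide. -/
theorem marginals_preserved_new_W_two_way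
    {𝒳 𝒴 𝒵 𝒰 𝒱 𝒲 : Type*}
    [Fintype 𝒳] [Fintype 𝒴] [Fintype 𝒵] [Fintype 𝒰] [Fintype 𝒱] [Fintype 𝒲]
    (a : 𝒳 → 𝒴 → ℝ) (pz : 𝒳 → 𝒵 → ℝ) (pu : 𝒴 → 𝒰 → ℝ)
    (pv : 𝒰 → 𝒵 → 𝒱 → ℝ) (pwbar : 𝒰 → 𝒱 → 𝒳 → 𝒴 → 𝒲 → ℝ)
    (ha0 : ∀ x y, 0 ≤ a x y) (ha1 : ∑ x, ∑ y, a x y = 1)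
    (hz0 : ∀ x z, 0 ≤ pz x z) (hz1 : ∀ x, ∑ z, pz x z = 1)
    (hu0 : ∀ y u, 0 ≤ pu y u) (hu1 : ∀ y, ∑ u, pu y u = 1)
    (hv0 : ∀ u z v, 0 ≤ pv u z v) (hv1 : ∀ u z, ∑ v, pv u z v = 1)
    (hw0 : ∀ u v x y w, 0 ≤ pwbar u v x y w) (hw1 : ∀ u v x y, ∑ w, pwbar u v x y w = 1)
    -- the joint pmf p̄ :
    (pbar : 𝒳 → 𝒴 → 𝒵 → 𝒰 → 𝒱 → 𝒲 → ℝ)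
    (hpbar : ∀ x y z u v w,
      pbar x y z u v w = a x y * pz x z * pu y u * pv u z v * pwbar u v x y w)
    -- the conditional pmf p̄(w|u,v,x) induced by p̄ :
    (c : 𝒰 → 𝒱 → 𝒳 → 𝒲 → ℝ)
    (hc : ∀ u v x w, (0 < ∑ y, ∑ z, ∑ w', pbar x y z u v w') →
      c u v x w = (∑ y, ∑ z, pbar x y z u v w) / (∑ y, ∑ z, ∑ w', pbar x y z u v w'))
    -- the new joint pmf p :
    (p : 𝒳 → 𝒴 → 𝒵 → 𝒰 → 𝒱 → 𝒲 → ℝ)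
    (hp : ∀ x y z u v w,
      p x y z u v w = a x y * pz x z * pu y u * pv u z v * c u v x w) :
    (∀ x y z u v, ∑ w, p x y z u v w = ∑ w, pbar x y z u v w) ∧
    (∀ x z u v w, ∑ y, p x y z u v w = ∑ y, pbar x y z u v w) := by
  have hsum_w_pbar : ∀ x y z u v, ∑ w, pbar x y z u v w
      = a x y * pz x z * pu y u * pv u z v := by
    intro x y z u v
    simp only [hpbar, ← Finset.mul_sum, hw1, mul_one]
  have key1 : ∀ x u v w, ∑ y, ∑ z, pbar x y z u v w
      = (∑ z, pz x z * pv u z v) * (∑ y, a x y * pu y u * pwbar u v x y w) := by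
    intro x u v w
    rw [Finset.sum_comm, Finset.sum_mul]
    refine Finset.sum_congr rfl fun z _ => ?_
    rw [Finset.mul_sum]
    refine Finset.sum_congr rfl fun y _ => ?_
    rw [hpbar]; ring
  have key2 : ∀ x u v, ∑ y, ∑ z, ∑ w', pbar x y z u v w'
      = (∑ z, pz x z * pv u z v) * (∑ y, a x y * pu y u) := by
    intro x u v
    simp only [hsum_w_pbar]
    rw [Finset.sum_comm, Finset.sum_mul]
    refine Finset.sum_congr rfl fun z _ => ?_
    rw [Finset.mul_sum]
    refine Finset.sum_congr rfl fun y _ => ?_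
    ring
  have hFsum : ∀ x u v, ∑ w, ∑ y, a x y * pu y u * pwbar u v x y w
      = ∑ y, a x y * pu y u := by
    intro x u v
    rw [Finset.sum_comm]
    refine Finset.sum_congr rfl fun y _ => ?_
    rw [← Finset.mul_sum, hw1, mul_one]
  constructor
  · intro x y z u v
    by_cases h0 : a x y * pz x z * pu y u * pv u z v = 0
    · rw [hsum_w_pbar, h0]
      have hps : ∑ w, p x y z u v w
          = a x y * pz x z * pu y u * pv u z v * ∑ w, c u v x w := by
        simp only [hp, ← Finset.mul_sum]
      rw [hps, h0, zero_mul]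
    · have hre : a x y * pz x z * pu y u * pv u z v
          = (pz x z * pv u z v) * (a x y * pu y u) := by ring
      rw [hre] at h0
      obtain ⟨hA, hB⟩ := mul_ne_zero_iff.mp h0
      have hgpos : 0 < ∑ z', pz x z' * pv u z' v := by
        have h1 : 0 < pz x z * pv u z v :=
          lt_of_le_of_ne (mul_nonneg (hz0 x z) (hv0 u z v)) (Ne.symm hA)
        calc (0:ℝ) < pz x z * pv u z v := h1
          _ ≤ ∑ z', pz x z' * pv u z' v :=
            Finset.single_le_sum (fun i _ => mul_nonneg (hz0 x i) (hv0 u i v))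
              (Finset.mem_univ z)
      have hhpos : 0 < ∑ y', a x y' * pu y' u := by
        have h1 : 0 < a x y * pu y u :=
          lt_of_le_of_ne (mul_nonneg (ha0 x y) (hu0 y u)) (Ne.symm hB)
        calc (0:ℝ) < a x y * pu y u := h1
          _ ≤ ∑ y', a x y' * pu y' u :=
            Finset.single_le_sum (fun i _ => mul_nonneg (ha0 x i) (hu0 i u))
              (Finset.mem_univ y)
      have hSpos : 0 < ∑ y', ∑ z', ∑ w', pbar x y' z' u v w' := by
        rw [key2]; exact mul_pos hgpos hhpos
      have hsumc : ∑ w, c u v x w = 1 := by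
        have hcval : ∀ w, c u v x w
            = ((∑ z', pz x z' * pv u z' v) * (∑ y', a x y' * pu y' u * pwbar u v x y' w))
              / ((∑ z', pz x z' * pv u z' v) * (∑ y', a x y' * pu y' u)) := by
          intro w
          rw [hc u v x w hSpos, key1, key2]
        simp only [hcval, div_eq_mul_inv]
        rw [← Finset.sum_mul, ← Finset.mul_sum, hFsum]
        exact mul_inv_cancel₀ (ne_of_gt (mul_pos hgpos hhpos))
      have hps : ∑ w, p x y z u v w
          = a x y * pz x z * pu y u * pv u z v * ∑ w, c u v x w := by
        simp only [hp, ← Finset.mul_sum]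
      rw [hps, hsumc, mul_one, hsum_w_pbar]
  · intro x z u v w
    have hsum_p : ∑ y, p x y z u v w
        = (∑ y, a x y * pu y u) * (pz x z * pv u z v * c u v x w) := by
      rw [Finset.sum_mul]
      refine Finset.sum_congr rfl fun y _ => ?_
      rw [hp]; ring
    have hsum_pbar : ∑ y, pbar x y z u v w
        = (∑ y, a x y * pu y u * pwbar u v x y w) * (pz x z * pv u z v) := by
      rw [Finset.sum_mul]
      refine Finset.sum_congr rfl fun y _ => ?_
      rw [hpbar]; ring
    by_cases hzv : pz x z * pv u z v = 0
    · rw [hsum_p, hsum_pbar, hzv, zero_mul, mul_zero, mul_zero]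
    · by_cases hh : (∑ y', a x y' * pu y' u) = 0
      · have hz' : ∀ y, a x y * pu y u = 0 := by
          intro y
          exact (Finset.sum_eq_zero_iff_of_nonneg
            (fun i _ => mul_nonneg (ha0 x i) (hu0 i u))).mp hh y (Finset.mem_univ y)
        rw [hsum_p, hsum_pbar, hh, zero_mul]
        rw [Finset.sum_eq_zero fun y _ => by rw [hz' y, zero_mul], zero_mul]
      · have hgpos : 0 < ∑ z', pz x z' * pv u z' v := by
          have h1 : 0 < pz x z * pv u z v :=
            lt_of_le_of_ne (mul_nonneg (hz0 x z) (hv0 u z v)) (Ne.symm hzv)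
          calc (0:ℝ) < pz x z * pv u z v := h1
            _ ≤ ∑ z', pz x z' * pv u z' v :=
              Finset.single_le_sum (fun i _ => mul_nonneg (hz0 x i) (hv0 u i v))
                (Finset.mem_univ z)
        have hhpos : 0 < ∑ y', a x y' * pu y' u :=
          lt_of_le_of_ne (Finset.sum_nonneg fun i _ => mul_nonneg (ha0 x i) (hu0 i u))
            (Ne.symm hh)
        have hSpos : 0 < ∑ y', ∑ z', ∑ w', pbar x y' z' u v w' := by
          rw [key2]; exact mul_pos hgpos hhpos
        rw [hsum_p, hsum_pbar, hc u v x w hSpos, key1, key2]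
        field_simp
end

section
/- Let (X_j, Y_j, Z_j), j = 1, ..., n, be i.i.d. triples of random variables with finite alphabets, each distributed according to a pmf p(x,y,z) satisfying the Markov chain Y - X - Z (Y and Z conditionally independent given X). Let T_1 = f_1(Y^n) for a deterministic function f_1. Then for every 1 ≤ i ≤ n, the Markov chain Y_i - (Y^{i-1}, T_1, Z^n) - X^{i-1} holds, i.e., Y_i and X^{i-1} are conditionally independent given (Y^{i-1}, T_1, Z^n). -/
open scoped Classical
open Finset

/-- For i.i.d. triples `(X_j,Y_j,Z_j) ~ q` with the single-letter Markov chain `Y - X - Z`, and `T₁ = f₁(Yⁿ)`, the Markov chain `Y_i - (Y^{i-1}, T₁, Zⁿ) - X^{i-1}` holds. -/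
theorem markov_stmt7
    {𝒳 𝒴 𝒵 : Type*} [Fintype 𝒳] [Fintype 𝒴] [Fintype 𝒵] {n : ℕ}
    (q : 𝒳 × 𝒴 × 𝒵 → ℝ) (hq0 : ∀ a, 0 ≤ q a) (hq1 : ∑ a, q a = 1)
    (hMarkov : CondIndepPmf q (fun a => a.2.1) (fun a => a.1) (fun a => a.2.2))
    {τ₁ : Type*}
    (f1 : (Fin n → 𝒴) → τ₁)
    (i : Fin n) :
    CondIndepPmf
      (fun ω : (Fin n → 𝒳) × (Fin n → 𝒴) × (Fin n → 𝒵) =>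
        ∏ j, q (ω.1 j, ω.2.1 j, ω.2.2 j))
      (fun ω => ω.2.1 i)
      (fun ω => ((fun j : {j : Fin n // j < i} => ω.2.1 j), f1 ω.2.1, ω.2.2))
      (fun ω => (fun j : {j : Fin n // j < i} => ω.1 j)) := by
  classical
  rintro a ⟨yp, t, z⟩ c
  -- abbreviations
  set R : (Fin n → 𝒴) → ℝ := fun y => ∏ j, ∑ x, q (x, y j, z j) with hR
  set W : (Fin n → 𝒴) → ℝ := fun y =>
    ∏ j, if h : j < i then q (c ⟨j, h⟩, y j, z j) else ∑ x, q (x, y j, z j) with hW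
  -- free x-sum
  have hA : ∀ y : Fin n → 𝒴, (∑ x : Fin n → 𝒳, ∏ j, q (x j, y j, z j)) = R y := by
    intro y
    show _ = ∏ j, ∑ x, q (x, y j, z j)
    rw [Finset.prod_univ_sum, Fintype.piFinset_univ]
  -- constrained x-sum
  have hB : ∀ y : Fin n → 𝒴,
      (∑ x : Fin n → 𝒳, if (fun j : {j : Fin n // j < i} => x j) = c
          then ∏ j, q (x j, y j, z j) else 0) = W y := by
    intro y
    have hstep : ∀ x : Fin n → 𝒳,
        (if (fun j : {j : Fin n // j < i} => x j) = c
          then ∏ j, q (x j, y j, z j) else 0)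
        = ∏ j, (if h : j < i then (if x j = c ⟨j, h⟩ then q (x j, y j, z j) else 0)
            else q (x j, y j, z j)) := by
      intro x
      by_cases hx : (fun j : {j : Fin n // j < i} => x j) = c
      · rw [if_pos hx]
        refine Finset.prod_congr rfl fun j _ => ?_
        by_cases hj : j < i
        · rw [dif_pos hj, if_pos (congrFun hx ⟨j, hj⟩)]
        · rw [dif_neg hj]
      · rw [if_neg hx]
        obtain ⟨j, hj⟩ : ∃ j : {j : Fin n // j < i}, x j ≠ c j := by
          by_contra h; push_neg at h; exact hx (funext h)
        refine (Finset.prod_eq_zero (Finset.mem_univ (j : Fin n)) ?_).symm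
        rw [dif_pos j.2, if_neg]
        simpa using hj
    simp_rw [hstep]
    show _ = ∏ j, (if h : j < i then q (c ⟨j, h⟩, y j, z j) else ∑ x, q (x, y j, z j))
    have : ∀ j : Fin n, (if h : j < i then q (c ⟨j, h⟩, y j, z j) else ∑ x, q (x, y j, z j))
        = ∑ x : 𝒳, (if h : j < i then (if x = c ⟨j, h⟩ then q (x, y j, z j) else 0)
            else q (x, y j, z j)) := by
      intro j
      by_cases hj : j < i
      · simp only [dif_pos hj]
        rw [Finset.sum_ite_eq' Finset.univ (c ⟨j, hj⟩) (fun x => q (x, y j, z j))]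
        simp
      · simp only [dif_neg hj]
    simp_rw [this]
    rw [Finset.prod_univ_sum, Fintype.piFinset_univ]
  -- collapse the big sum over ω
  have collapse : ∀ (p : (Fin n → 𝒴) → Prop) (cx : (Fin n → 𝒳) → Prop),
      (∑ ω : (Fin n → 𝒳) × (Fin n → 𝒴) × (Fin n → 𝒵),
        if p ω.2.1 ∧ ω.2.2 = z ∧ cx ω.1 then ∏ j, q (ω.1 j, ω.2.1 j, ω.2.2 j) else 0)
      = ∑ y : Fin n → 𝒴, if p y then
          (∑ x : Fin n → 𝒳, if cx x then ∏ j, q (x j, y j, z j) else 0) else 0 := by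
    intro p cx
    rw [Fintype.sum_prod_type]
    simp_rw [Fintype.sum_prod_type]
    rw [Finset.sum_comm]
    refine Finset.sum_congr rfl fun y _ => ?_
    by_cases hp : p y
    · rw [if_pos hp]
      refine Finset.sum_congr rfl fun x _ => ?_
      have hz : ∀ z' : Fin n → 𝒵,
          (if p y ∧ z' = z ∧ cx x then ∏ j, q (x j, y j, z' j) else 0)
          = if z' = z then (if cx x then ∏ j, q (x j, y j, z' j) else 0) else 0 := by
        intro z'
        by_cases h1 : z' = z <;> by_cases h2 : cx x <;> simp [h1, h2, hp]
      simp_rw [hz]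
      rw [Finset.sum_ite_eq' Finset.univ z]
      simp
    · rw [if_neg hp]
      exact Finset.sum_eq_zero fun x _ => Finset.sum_eq_zero fun z' _ => by simp [hp]
  -- the two y-predicates
  set Pa : (Fin n → 𝒴) → Prop := fun y =>
    y i = a ∧ (fun j : {j : Fin n // j < i} => y j) = yp ∧ f1 y = t with hPa
  set Pb : (Fin n → 𝒴) → Prop := fun y =>
    (fun j : {j : Fin n // j < i} => y j) = yp ∧ f1 y = t with hPb
  have ififf : ∀ {p p' : Prop} {hp : Decidable p} {hp' : Decidable p'} (h : p ↔ p') (r : ℝ),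
      (if p then r else 0) = if p' then r else 0 := by
    intro p p' hp hp' h r
    by_cases h1 : p
    · rw [if_pos h1, if_pos (h.mp h1)]
    · rw [if_neg h1, if_neg fun h2 => h1 (h.mpr h2)]
  have e1 : (∑ ω : (Fin n → 𝒳) × (Fin n → 𝒴) × (Fin n → 𝒵),
      if ω.2.1 i = a ∧ ((fun j : {j : Fin n // j < i} => ω.2.1 j), f1 ω.2.1, ω.2.2) = (yp, t, z)
          ∧ (fun j : {j : Fin n // j < i} => ω.1 j) = c
        then ∏ j, q (ω.1 j, ω.2.1 j, ω.2.2 j) else 0)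
      = ∑ y : Fin n → 𝒴, if Pa y then W y else 0 := by
    refine (Finset.sum_congr rfl fun ω _ => ififf
      (show _ ↔ Pa ω.2.1 ∧ ω.2.2 = z ∧ (fun j : {j : Fin n // j < i} => ω.1 j) = c by
        rw [hPa]; simp only [Prod.mk.injEq]; tauto) _).trans
      ((collapse Pa (fun x => (fun j : {j : Fin n // j < i} => x j) = c)).trans
        (Finset.sum_congr rfl fun y _ => by
          by_cases hp : Pa y
          · rw [if_pos hp, if_pos hp]
            refine Eq.trans (Finset.sum_congr rfl fun x _ => ?_) (hB y)
            by_cases hx : (fun j : {j : Fin n // j < i} => x j) = c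
            · rw [if_pos hx, if_pos hx]
            · rw [if_neg hx, if_neg hx]
          · rw [if_neg hp, if_neg hp]))
  have e2 : (∑ ω : (Fin n → 𝒳) × (Fin n → 𝒴) × (Fin n → 𝒵),
      if ((fun j : {j : Fin n // j < i} => ω.2.1 j), f1 ω.2.1, ω.2.2) = (yp, t, z)
        then ∏ j, q (ω.1 j, ω.2.1 j, ω.2.2 j) else 0)
      = ∑ y : Fin n → 𝒴, if Pb y then R y else 0 := by
    refine (Finset.sum_congr rfl fun ω _ => ififf
      (show _ ↔ Pb ω.2.1 ∧ ω.2.2 = z ∧ True by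
        rw [hPb]; simp only [Prod.mk.injEq]; tauto) _).trans
      ((collapse Pb (fun _ => True)).trans
        (Finset.sum_congr rfl fun y _ => by
          by_cases hp : Pb y
          · rw [if_pos hp, if_pos hp]
            exact (Finset.sum_congr rfl fun x _ => if_pos trivial).trans (hA y)
          · rw [if_neg hp, if_neg hp]))
  have e3 : (∑ ω : (Fin n → 𝒳) × (Fin n → 𝒴) × (Fin n → 𝒵),
      if ω.2.1 i = a ∧ ((fun j : {j : Fin n // j < i} => ω.2.1 j), f1 ω.2.1, ω.2.2) = (yp, t, z)
        then ∏ j, q (ω.1 j, ω.2.1 j, ω.2.2 j) else 0)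
      = ∑ y : Fin n → 𝒴, if Pa y then R y else 0 := by
    refine (Finset.sum_congr rfl fun ω _ => ififf
      (show _ ↔ Pa ω.2.1 ∧ ω.2.2 = z ∧ True by
        rw [hPa]; simp only [Prod.mk.injEq]; tauto) _).trans
      ((collapse Pa (fun _ => True)).trans
        (Finset.sum_congr rfl fun y _ => by
          by_cases hp : Pa y
          · rw [if_pos hp, if_pos hp]
            exact (Finset.sum_congr rfl fun x _ => if_pos trivial).trans (hA y)
          · rw [if_neg hp, if_neg hp]))
  have e4 : (∑ ω : (Fin n → 𝒳) × (Fin n → 𝒴) × (Fin n → 𝒵),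
      if ((fun j : {j : Fin n // j < i} => ω.2.1 j), f1 ω.2.1, ω.2.2) = (yp, t, z)
          ∧ (fun j : {j : Fin n // j < i} => ω.1 j) = c
        then ∏ j, q (ω.1 j, ω.2.1 j, ω.2.2 j) else 0)
      = ∑ y : Fin n → 𝒴, if Pb y then W y else 0 := by
    refine (Finset.sum_congr rfl fun ω _ => ififf
      (show _ ↔ Pb ω.2.1 ∧ ω.2.2 = z ∧ (fun j : {j : Fin n // j < i} => ω.1 j) = c by
        rw [hPb]; simp only [Prod.mk.injEq]; tauto) _).trans
      ((collapse Pb (fun x => (fun j : {j : Fin n // j < i} => x j) = c)).trans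
        (Finset.sum_congr rfl fun y _ => by
          by_cases hp : Pb y
          · rw [if_pos hp, if_pos hp]
            refine Eq.trans (Finset.sum_congr rfl fun x _ => ?_) (hB y)
            by_cases hx : (fun j : {j : Fin n // j < i} => x j) = c
            · rw [if_pos hx, if_pos hx]
            · rw [if_neg hx, if_neg hx]
          · rw [if_neg hp, if_neg hp]))
  -- the pointwise exchange identity
  have key : ∀ y y' : Fin n → 𝒴, (fun j : {j : Fin n // j < i} => y j) = yp →
      (fun j : {j : Fin n // j < i} => y' j) = yp → W y * R y' = R y * W y' := by
    intro y y' h h'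
    rw [hW, hR]
    simp only
    rw [← Finset.prod_mul_distrib, ← Finset.prod_mul_distrib]
    refine Finset.prod_congr rfl fun j _ => ?_
    by_cases hj : j < i
    · rw [dif_pos hj, dif_pos hj]
      have h1 : y j = yp ⟨j, hj⟩ := congrFun h ⟨j, hj⟩
      have h2 : y' j = yp ⟨j, hj⟩ := congrFun h' ⟨j, hj⟩
      rw [h1, h2]; ring
    · rw [dif_neg hj, dif_neg hj]
  have final : (∑ y : Fin n → 𝒴, if Pa y then W y else 0) *
        (∑ y : Fin n → 𝒴, if Pb y then R y else 0)
      = (∑ y : Fin n → 𝒴, if Pa y then R y else 0) *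
        (∑ y : Fin n → 𝒴, if Pb y then W y else 0) := by
    rw [Finset.sum_mul_sum, Finset.sum_mul_sum]
    refine Finset.sum_congr rfl fun y _ => Finset.sum_congr rfl fun y' _ => ?_
    by_cases h1 : Pa y
    · by_cases h2 : Pb y'
      · rw [if_pos h1, if_pos h2, if_pos h1, if_pos h2]
        exact key y y' h1.2.1 h2.1
      · simp [h2]
    · simp [h1]
  rw [← e1, ← e2, ← e3, ← e4] at final
  have iteeq : ∀ {p : Prop} {h1 h2 : Decidable p} (A : ℝ),
      @ite ℝ p h1 A 0 = @ite ℝ p h2 A 0 := by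
    intro p h1 h2 A
    by_cases h : p
    · rw [if_pos h, if_pos h]
    · rw [if_neg h, if_neg h]
  refine Eq.trans (Eq.trans ?_ final) ?_
  · exact congrArg₂ (· * ·) (Finset.sum_congr rfl fun ω _ => iteeq _)
      (Finset.sum_congr rfl fun ω _ => iteeq _)
  · exact (congrArg₂ (· * ·) (Finset.sum_congr rfl fun ω _ => iteeq _)
      (Finset.sum_congr rfl fun ω _ => iteeq _)).symm
end

section
/- Let (X_j, Y_j, Z_j), j = 1, ..., n, be i.i.d. triples of random variables with finite alphabets, each distributed according to a pmf p(x,y,z) satisfying the Markov chain Y - Z - X (Y and X conditionally independent given Z). Let T_1 = f_1(Y^n) for a deterministic function f_1. Then for every 1 ≤ i ≤ n, the Markov chain Y_i - (Y^{i-1}, T_1, X_i^n) - (X^{i-1}, Z^{i-1}) holds, i.e., Y_i and the pair (X^{i-1}, Z^{i-1}) are conditionally independent given (Y^{i-1}, T_1, X_i^n). -/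
open scoped Classical
open Finset

theorem ifCongr' {α : Sort*} {b c : Prop} {i1 : Decidable b} {i2 : Decidable c}
    {x y u v : α} (h : b ↔ c) (hx : x = u) (hy : y = v) :
    @ite _ b i1 x y = @ite _ c i2 u v := by
  cases i2 with
  | isTrue hc => rw [if_pos hc, if_pos (h.mpr hc), hx]
  | isFalse hc => rw [if_neg hc, if_neg (fun hb => hc (h.mp hb)), hy]

section Aux
variable {n : ℕ} (i : Fin n)

noncomputable def eSplit (i : Fin n) (α : Type*) :
    (Fin n → α) ≃ ({j : Fin n // j < i} → α) × ({j : Fin n // ¬ j < i} → α) :=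
  Equiv.piEquivPiSubtypeProd (fun j : Fin n => j < i) (fun _ => α)

lemma eSplit_apply {α : Type*} (x : Fin n → α) :
    eSplit i α x = ((fun j : {j : Fin n // j < i} => x j),
      (fun j : {j : Fin n // ¬ j < i} => x j)) := rfl

lemma eSplit_symm_left {α : Type*} (wl : {j : Fin n // j < i} → α)
    (wr : {j : Fin n // ¬ j < i} → α) :
    (fun j : {j : Fin n // j < i} => (eSplit i α).symm (wl, wr) j) = wl := by
  funext j
  show (if h : (j : Fin n) < i then wl ⟨j, h⟩ else wr ⟨j, h⟩) = wl j
  rw [dif_pos j.2]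

lemma eSplit_symm_right {α : Type*} (wl : {j : Fin n // j < i} → α)
    (wr : {j : Fin n // ¬ j < i} → α) :
    (fun j : {j : Fin n // ¬ j < i} => (eSplit i α).symm (wl, wr) j) = wr := by
  funext j
  show (if h : (j : Fin n) < i then wl ⟨j, h⟩ else wr ⟨j, h⟩) = wr j
  rw [dif_neg j.2]

lemma sum6 {α β γ δ ε ζ : Type*} [Fintype α] [Fintype β] [Fintype γ] [Fintype δ]
    [Fintype ε] [Fintype ζ]
    (A : γ → ℝ) (B : β → ℝ) (C : α → ε → ℝ) (D : δ → ζ → ℝ)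
    (hA : ∑ y, A y = 1) (hB : ∑ x, B x = 1) :
    ∑ xl : α, ∑ xr : β, ∑ yl : γ, ∑ yr : δ, ∑ zl : ε, ∑ zr : ζ,
      A yl * (B xr * (C xl zl * D yr zr))
    = (∑ xl : α, ∑ zl : ε, C xl zl) * (∑ yr : δ, ∑ zr : ζ, D yr zr) := by
  simp only [← Finset.mul_sum, ← Finset.sum_mul, hA, hB, one_mul, mul_one]

variable {𝒳 𝒴 𝒵 : Type*} [Fintype 𝒳] [Fintype 𝒴] [Fintype 𝒵]
  (q : 𝒳 × 𝒴 × 𝒵 → ℝ)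

set_option maxHeartbeats 1000000 in
lemma master
    (b1 : {j : Fin n // j < i} → 𝒴) (b3 : {j : Fin n // ¬ j < i} → 𝒳)
    (φ : ({j : Fin n // j < i} → 𝒳) → ({j : Fin n // j < i} → 𝒵) → Prop)
    (ψ : ({j : Fin n // ¬ j < i} → 𝒴) → Prop)
    (Cond : (Fin n → 𝒳) × (Fin n → 𝒴) × (Fin n → 𝒵) → Prop)
    (h : ∀ x y z, Cond (x, y, z) ↔
      ((fun j : {j : Fin n // j < i} => y j) = b1 ∧
       ψ (fun j : {j : Fin n // ¬ j < i} => y j) ∧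
       (fun j : {j : Fin n // ¬ j < i} => x j) = b3 ∧
       φ (fun j : {j : Fin n // j < i} => x j) (fun j : {j : Fin n // j < i} => z j))) :
    ∑ ω : (Fin n → 𝒳) × (Fin n → 𝒴) × (Fin n → 𝒵),
      (if Cond ω then ∏ j, q (ω.1 j, ω.2.1 j, ω.2.2 j) else 0)
    = (∑ xl : {j : Fin n // j < i} → 𝒳, ∑ zl : {j : Fin n // j < i} → 𝒵,
        if φ xl zl then ∏ j : {j : Fin n // j < i}, q (xl j, b1 j, zl j) else 0) *
      (∑ yr : {j : Fin n // ¬ j < i} → 𝒴, ∑ zr : {j : Fin n // ¬ j < i} → 𝒵,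
        if ψ yr then ∏ j : {j : Fin n // ¬ j < i}, q (b3 j, yr j, zr j) else 0) := by
  classical
  rw [← Equiv.sum_comp ((eSplit i 𝒳).symm.prodCongr
      ((eSplit i 𝒴).symm.prodCongr (eSplit i 𝒵).symm))
    (fun ω => if Cond ω then ∏ j, q (ω.1 j, ω.2.1 j, ω.2.2 j) else 0)]
  have key : ∀ (xl : {j : Fin n // j < i} → 𝒳) (xr : {j : Fin n // ¬ j < i} → 𝒳)
      (yl : {j : Fin n // j < i} → 𝒴) (yr : {j : Fin n // ¬ j < i} → 𝒴)
      (zl : {j : Fin n // j < i} → 𝒵) (zr : {j : Fin n // ¬ j < i} → 𝒵),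
      (fun ω : (Fin n → 𝒳) × (Fin n → 𝒴) × (Fin n → 𝒵) =>
          if Cond ω then ∏ j, q (ω.1 j, ω.2.1 j, ω.2.2 j) else 0)
        (((eSplit i 𝒳).symm.prodCongr ((eSplit i 𝒴).symm.prodCongr (eSplit i 𝒵).symm))
          ((xl, xr), (yl, yr), (zl, zr)))
      = (if yl = b1 then (1:ℝ) else 0) *
        ((if xr = b3 then (1:ℝ) else 0) *
         ((if φ xl zl then ∏ j : {j : Fin n // j < i}, q (xl j, b1 j, zl j) else 0) *
          (if ψ yr then ∏ j : {j : Fin n // ¬ j < i}, q (b3 j, yr j, zr j) else 0))) := by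
    intro xl xr yl yr zl zr
    show (if Cond ((eSplit i 𝒳).symm (xl, xr), (eSplit i 𝒴).symm (yl, yr),
        (eSplit i 𝒵).symm (zl, zr)) then _ else (0:ℝ)) = _
    rw [if_congr (by rw [h, eSplit_symm_left, eSplit_symm_right, eSplit_symm_right,
      eSplit_symm_left, eSplit_symm_left]) rfl rfl]
    by_cases hall : (yl = b1 ∧ ψ yr ∧ xr = b3 ∧ φ xl zl)
    · obtain ⟨h1, h4, h2, h3⟩ := hall
      rw [if_pos ⟨h1, h4, h2, h3⟩, if_pos h1, if_pos h2, if_pos h3, if_pos h4, one_mul, one_mul]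
      rw [h1, h2]
      simp only [Equiv.prodCongr_apply, Prod.map]
      rw [← Fintype.prod_subtype_mul_prod_subtype (fun j : Fin n => j < i)
        (fun j => q ((eSplit i 𝒳).symm (xl, b3) j, (eSplit i 𝒴).symm (b1, yr) j,
          (eSplit i 𝒵).symm (zl, zr) j))]
      congr 1
      · exact Finset.prod_congr rfl fun j _ => by
          rw [congrFun (eSplit_symm_left i xl b3) j, congrFun (eSplit_symm_left i b1 yr) j,
            congrFun (eSplit_symm_left i zl zr) j]
      · exact Finset.prod_congr rfl fun j _ => by
          rw [congrFun (eSplit_symm_right i xl b3) j, congrFun (eSplit_symm_right i b1 yr) j,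
            congrFun (eSplit_symm_right i zl zr) j]
    · rw [if_neg hall]
      rcases (by tauto : ¬(yl = b1) ∨ ¬ψ yr ∨ ¬(xr = b3) ∨ ¬φ xl zl) with h'|h'|h'|h' <;>
        simp [h']
  simp only [Fintype.sum_prod_type]
  simp only [key]
  simp only [← Finset.mul_sum, ← Finset.sum_mul]
  simp [Finset.sum_ite_eq']
end Aux

/-- For i.i.d. triples `(X_j,Y_j,Z_j) ~ q` with the single-letter Markov chain `Y - Z - X`, and `T₁ = f₁(Yⁿ)`, the Markov chain `Y_i - (Y^{i-1}, T₁, X_iⁿ) - (X^{i-1}, Z^{i-1})` holds. -/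
theorem markov_stmt8
    {𝒳 𝒴 𝒵 : Type*} [Fintype 𝒳] [Fintype 𝒴] [Fintype 𝒵] {n : ℕ}
    (q : 𝒳 × 𝒴 × 𝒵 → ℝ) (hq0 : ∀ a, 0 ≤ q a) (hq1 : ∑ a, q a = 1)
    (hMarkov : CondIndepPmf q (fun a => a.2.1) (fun a => a.2.2) (fun a => a.1))
    {τ₁ : Type*}
    (f1 : (Fin n → 𝒴) → τ₁)
    (i : Fin n) :
    CondIndepPmf
      (fun ω : (Fin n → 𝒳) × (Fin n → 𝒴) × (Fin n → 𝒵) =>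
        ∏ j, q (ω.1 j, ω.2.1 j, ω.2.2 j))
      (fun ω => ω.2.1 i)
      (fun ω => ((fun j : {j : Fin n // j < i} => ω.2.1 j), f1 ω.2.1, (fun j : {j : Fin n // i ≤ j} => ω.1 j)))
      (fun ω => ((fun j : {j : Fin n // j < i} => ω.1 j), (fun j : {j : Fin n // j < i} => ω.2.2 j))) := by
  classical
  rintro a ⟨b1, t, b3⟩ ⟨c1, c2⟩
  set b3' : {j : Fin n // ¬ j < i} → 𝒳 := fun j => b3 ⟨j.1, not_lt.1 j.2⟩ with hb3'
  have hyrec : ∀ (y : Fin n → 𝒴), (fun j : {j : Fin n // j < i} => y j) = b1 →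
      (eSplit i 𝒴).symm (b1, fun j : {j : Fin n // ¬ j < i} => y j) = y := by
    intro y hy
    conv_rhs => rw [← (eSplit i 𝒴).symm_apply_apply y]
    rw [eSplit_apply, hy]
  have hx3 : ∀ (x : Fin n → 𝒳),
      ((fun j : {j : Fin n // i ≤ j} => x j) = b3) ↔
      ((fun j : {j : Fin n // ¬ j < i} => x j) = b3') := by
    intro x
    constructor
    · intro hx
      funext j
      exact congrFun hx ⟨j.1, not_lt.1 j.2⟩
    · intro hx
      funext j
      exact congrFun hx ⟨j.1, not_lt.2 j.2⟩
  set ψ₁ : ({j : Fin n // ¬ j < i} → 𝒴) → Prop :=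
    fun yr => yr ⟨i, lt_irrefl i⟩ = a ∧ f1 ((eSplit i 𝒴).symm (b1, yr)) = t with hψ₁
  set ψ₂ : ({j : Fin n // ¬ j < i} → 𝒴) → Prop :=
    fun yr => f1 ((eSplit i 𝒴).symm (b1, yr)) = t with hψ₂
  set φ₁ : ({j : Fin n // j < i} → 𝒳) → ({j : Fin n // j < i} → 𝒵) → Prop :=
    fun xl zl => xl = c1 ∧ zl = c2 with hφ₁
  have h1 : ∀ (x : Fin n → 𝒳) (y : Fin n → 𝒴) (z : Fin n → 𝒵),
      (y i = a ∧ ((fun j : {j : Fin n // j < i} => y j), f1 y,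
          (fun j : {j : Fin n // i ≤ j} => x j)) = (b1, t, b3) ∧
        ((fun j : {j : Fin n // j < i} => x j), (fun j : {j : Fin n // j < i} => z j)) = (c1, c2)) ↔
      ((fun j : {j : Fin n // j < i} => y j) = b1 ∧
       ψ₁ (fun j : {j : Fin n // ¬ j < i} => y j) ∧
       (fun j : {j : Fin n // ¬ j < i} => x j) = b3' ∧
       φ₁ (fun j : {j : Fin n // j < i} => x j) (fun j : {j : Fin n // j < i} => z j)) := by
    intro x y z
    simp only [Prod.mk.injEq, hψ₁, hφ₁]
    constructor
    · rintro ⟨ha, ⟨hyl, ht, hx⟩, hc1, hc2⟩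
      rw [hyrec y hyl]
      exact ⟨hyl, ⟨ha, ht⟩, (hx3 x).1 hx, hc1, hc2⟩
    · rintro ⟨hyl, ⟨ha, ht⟩, hx, hc1, hc2⟩
      rw [hyrec y hyl] at ht
      exact ⟨ha, ⟨hyl, ht, (hx3 x).2 hx⟩, hc1, hc2⟩
  have h2 : ∀ (x : Fin n → 𝒳) (y : Fin n → 𝒴) (z : Fin n → 𝒵),
      (((fun j : {j : Fin n // j < i} => y j), f1 y,
          (fun j : {j : Fin n // i ≤ j} => x j)) = (b1, t, b3)) ↔
      ((fun j : {j : Fin n // j < i} => y j) = b1 ∧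
       ψ₂ (fun j : {j : Fin n // ¬ j < i} => y j) ∧
       (fun j : {j : Fin n // ¬ j < i} => x j) = b3' ∧
       (fun _ _ => True) (fun j : {j : Fin n // j < i} => x j) (fun j : {j : Fin n // j < i} => z j)) := by
    intro x y z
    simp only [Prod.mk.injEq, hψ₂]
    constructor
    · rintro ⟨hyl, ht, hx⟩
      rw [hyrec y hyl]
      exact ⟨hyl, ht, (hx3 x).1 hx, trivial⟩
    · rintro ⟨hyl, ht, hx, -⟩
      rw [hyrec y hyl] at ht
      exact ⟨hyl, ht, (hx3 x).2 hx⟩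
  have h3 : ∀ (x : Fin n → 𝒳) (y : Fin n → 𝒴) (z : Fin n → 𝒵),
      (y i = a ∧ ((fun j : {j : Fin n // j < i} => y j), f1 y,
          (fun j : {j : Fin n // i ≤ j} => x j)) = (b1, t, b3)) ↔
      ((fun j : {j : Fin n // j < i} => y j) = b1 ∧
       ψ₁ (fun j : {j : Fin n // ¬ j < i} => y j) ∧
       (fun j : {j : Fin n // ¬ j < i} => x j) = b3' ∧
       (fun _ _ => True) (fun j : {j : Fin n // j < i} => x j) (fun j : {j : Fin n // j < i} => z j)) := by
    intro x y z
    simp only [Prod.mk.injEq, hψ₁]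
    constructor
    · rintro ⟨ha, hyl, ht, hx⟩
      rw [hyrec y hyl]
      exact ⟨hyl, ⟨ha, ht⟩, (hx3 x).1 hx, trivial⟩
    · rintro ⟨hyl, ⟨ha, ht⟩, hx, -⟩
      rw [hyrec y hyl] at ht
      exact ⟨ha, hyl, ht, (hx3 x).2 hx⟩
  have h4 : ∀ (x : Fin n → 𝒳) (y : Fin n → 𝒴) (z : Fin n → 𝒵),
      (((fun j : {j : Fin n // j < i} => y j), f1 y,
          (fun j : {j : Fin n // i ≤ j} => x j)) = (b1, t, b3) ∧
        ((fun j : {j : Fin n // j < i} => x j), (fun j : {j : Fin n // j < i} => z j)) = (c1, c2)) ↔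
      ((fun j : {j : Fin n // j < i} => y j) = b1 ∧
       ψ₂ (fun j : {j : Fin n // ¬ j < i} => y j) ∧
       (fun j : {j : Fin n // ¬ j < i} => x j) = b3' ∧
       φ₁ (fun j : {j : Fin n // j < i} => x j) (fun j : {j : Fin n // j < i} => z j)) := by
    intro x y z
    simp only [Prod.mk.injEq, hψ₂, hφ₁]
    constructor
    · rintro ⟨⟨hyl, ht, hx⟩, hc1, hc2⟩
      rw [hyrec y hyl]
      exact ⟨hyl, ht, (hx3 x).1 hx, hc1, hc2⟩
    · rintro ⟨hyl, ht, hx, hc1, hc2⟩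
      rw [hyrec y hyl] at ht
      exact ⟨⟨hyl, ht, (hx3 x).2 hx⟩, hc1, hc2⟩
  have e1 := master i q b1 b3' φ₁ ψ₁
    (fun ω => ω.2.1 i = a ∧ ((fun j : {j : Fin n // j < i} => ω.2.1 j), f1 ω.2.1,
        (fun j : {j : Fin n // i ≤ j} => ω.1 j)) = (b1, t, b3) ∧
      ((fun j : {j : Fin n // j < i} => ω.1 j), (fun j : {j : Fin n // j < i} => ω.2.2 j)) = (c1, c2))
    h1
  have e2 := master i q b1 b3' (fun _ _ => True) ψ₂
    (fun ω => ((fun j : {j : Fin n // j < i} => ω.2.1 j), f1 ω.2.1,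
        (fun j : {j : Fin n // i ≤ j} => ω.1 j)) = (b1, t, b3))
    h2
  have e3 := master i q b1 b3' (fun _ _ => True) ψ₁
    (fun ω => ω.2.1 i = a ∧ ((fun j : {j : Fin n // j < i} => ω.2.1 j), f1 ω.2.1,
        (fun j : {j : Fin n // i ≤ j} => ω.1 j)) = (b1, t, b3))
    h3
  have e4 := master i q b1 b3' φ₁ ψ₂
    (fun ω => ((fun j : {j : Fin n // j < i} => ω.2.1 j), f1 ω.2.1,
        (fun j : {j : Fin n // i ≤ j} => ω.1 j)) = (b1, t, b3) ∧
      ((fun j : {j : Fin n // j < i} => ω.1 j), (fun j : {j : Fin n // j < i} => ω.2.2 j)) = (c1, c2))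
    h4
  refine Eq.trans (congrArg₂ (· * ·)
      ((Finset.sum_congr rfl fun ω _ => ifCongr' Iff.rfl rfl rfl).trans e1)
      ((Finset.sum_congr rfl fun ω _ => ifCongr' Iff.rfl rfl rfl).trans e2))
    (Eq.trans ?_ (congrArg₂ (· * ·)
      ((Finset.sum_congr rfl fun ω _ => ifCongr' Iff.rfl rfl rfl).trans e3)
      ((Finset.sum_congr rfl fun ω _ => ifCongr' Iff.rfl rfl rfl).trans e4)).symm)
  ring
end

section
/- Let (X_j, Y_j, Z_j), j = 1, ..., n, be i.i.d. triples of random variables with finite alphabets, each distributed according to a pmf p(x,y,z) satisfying the Markov chain Y - Z - X (Y and X conditionally independent given Z). Let T_1 = f_1(Y^n) for a deterministic function f_1. Then for every 1 ≤ i ≤ n, the Markov chain X^{i-1} - (Z^{i-1}, T_1, X_i^n) - (Z_i, Y_i) holds, i.e., X^{i-1} and the pair (Z_i, Y_i) are conditionally independent given (Z^{i-1}, T_1, X_i^n). -/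
open scoped Classical
open Finset

/-! ### Auxiliary lemmas -/

lemma aux_pi_sum {n : ℕ} {α : Type*} [Fintype α] (p : Fin n → α → Prop) (f : Fin n → α → ℝ) :
    (∑ x : Fin n → α, if ∀ j, p j (x j) then ∏ j, f j (x j) else 0)
      = ∏ j, ∑ a : α, if p j a then f j a else 0 := by
  have h1 : ∀ j, (∑ a : α, if p j a then f j a else 0)
      = ∑ a ∈ Finset.univ.filter (p j), f j a := by
    intro j; rw [Finset.sum_filter]
  simp_rw [h1]
  rw [Finset.prod_univ_sum, ← Finset.sum_filter]
  apply Finset.sum_congr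
  · ext x; simp [Fintype.mem_piFinset]
  · intro x _; rfl

lemma reduce {𝒳 𝒴 𝒵 : Type*} [Fintype 𝒳] [Fintype 𝒴] [Fintype 𝒵] {n : ℕ}
    (q : 𝒳 × 𝒴 × 𝒵 → ℝ)
    (px : Fin n → 𝒳 → Prop) (pz : Fin n → 𝒵 → Prop) (py : (Fin n → 𝒴) → Prop) :
    (∑ ω : (Fin n → 𝒳) × (Fin n → 𝒴) × (Fin n → 𝒵),
        if py ω.2.1 ∧ (∀ j, px j (ω.1 j)) ∧ (∀ j, pz j (ω.2.2 j))
        then ∏ j, q (ω.1 j, ω.2.1 j, ω.2.2 j) else 0)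
      = ∑ y : Fin n → 𝒴, if py y then
          ∏ j, ∑ x : 𝒳, ∑ z : 𝒵, if px j x ∧ pz j z then q (x, y j, z) else 0
        else 0 := by
  rw [Fintype.sum_prod_type]
  simp_rw [Fintype.sum_prod_type]
  rw [Finset.sum_comm]
  refine Finset.sum_congr rfl fun y _ => ?_
  by_cases hy : py y
  · simp only [hy, true_and]
    have step1 : ∀ x : Fin n → 𝒳,
        (∑ z : Fin n → 𝒵, if (∀ j, px j (x j)) ∧ (∀ j, pz j (z j))
            then ∏ j, q (x j, y j, z j) else 0)
        = if (∀ j, px j (x j)) then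
            ∏ j, ∑ z : 𝒵, if pz j z then q (x j, y j, z) else 0 else 0 := by
      intro x
      by_cases hx : ∀ j, px j (x j)
      · rw [if_pos hx]
        refine (Finset.sum_congr rfl fun z _ => ?_).trans
          (aux_pi_sum pz (fun j z => q (x j, y j, z)))
        exact if_congr (and_iff_right hx) rfl rfl
      · simp [hx]
    simp_rw [step1]
    rw [aux_pi_sum (fun j a => px j a)
        (fun j a => ∑ z : 𝒵, if pz j z then q (a, y j, z) else 0)]
    refine Finset.prod_congr rfl fun j _ => ?_
    refine Finset.sum_congr rfl fun x _ => ?_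
    by_cases hx : px j x
    · simp [hx]
    · simp [hx]
  · simp [hy]

lemma sum_if_single {α : Type*} [Fintype α] {p : α → Prop} [DecidablePred p] {b : α}
    (hp : ∀ a, p a ↔ a = b) (f : α → ℝ) :
    (∑ a : α, if p a then f a else 0) = f b := by
  rw [Finset.sum_congr rfl fun a _ => if_congr (hp a) rfl rfl]
  simp [Finset.sum_ite_eq']

lemma sum2_point {𝒳 𝒵 : Type*} [Fintype 𝒳] [Fintype 𝒵] {p : 𝒳 → 𝒵 → Prop}
    [∀ x z, Decidable (p x z)] {A : 𝒳} {B : 𝒵}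
    (hp : ∀ x z, p x z ↔ x = A ∧ z = B) (f : 𝒳 → 𝒵 → ℝ) :
    (∑ x : 𝒳, ∑ z : 𝒵, if p x z then f x z else 0) = f A B := by
  have step : ∀ x, (∑ z : 𝒵, if p x z then f x z else 0) = if x = A then f x B else 0 := by
    intro x
    by_cases hx : x = A
    · rw [if_pos hx]
      refine (Finset.sum_congr rfl fun z _ =>
        if_congr (show p x z ↔ z = B by rw [hp]; simp [hx]) rfl rfl).trans ?_
      exact sum_if_single (p := fun z => z = B) (fun z => Iff.rfl) (fun z => f x z)
    · rw [if_neg hx]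
      exact Finset.sum_eq_zero fun z _ => if_neg (fun hc => hx ((hp x z).mp hc).1)
  rw [Finset.sum_congr rfl fun x _ => step x]
  exact sum_if_single (p := fun x => x = A) (fun x => Iff.rfl) (fun x => f x B)

lemma sum2_zpoint {𝒳 𝒵 : Type*} [Fintype 𝒳] [Fintype 𝒵] {p : 𝒳 → 𝒵 → Prop}
    [∀ x z, Decidable (p x z)] {B : 𝒵}
    (hp : ∀ x z, p x z ↔ z = B) (f : 𝒳 → 𝒵 → ℝ) :
    (∑ x : 𝒳, ∑ z : 𝒵, if p x z then f x z else 0) = ∑ x : 𝒳, f x B := by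
  refine Finset.sum_congr rfl fun x _ => ?_
  refine (Finset.sum_congr rfl fun z _ => if_congr (hp x z) rfl rfl).trans ?_
  exact sum_if_single (p := fun z => z = B) (fun z => Iff.rfl) (fun z => f x z)

lemma markov_key {𝒳 𝒴 𝒵 : Type*} [Fintype 𝒳] [Fintype 𝒴] [Fintype 𝒵]
    (q : 𝒳 × 𝒴 × 𝒵 → ℝ) (hq0 : ∀ a, 0 ≤ q a)
    (hM : CondIndepPmf q (fun a => a.2.1) (fun a => a.2.2) (fun a => a.1)) :
    ∀ (x : 𝒳) (y y' : 𝒴) (z : 𝒵),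
      q (x, y, z) * (∑ x' : 𝒳, q (x', y', z))
        = q (x, y', z) * (∑ x' : 𝒳, q (x', y, z)) := by
  intro x y y' z
  have hM' : ∀ (x : 𝒳) (y : 𝒴),
      q (x, y, z) * (∑ a : 𝒳 × 𝒴 × 𝒵, if a.2.2 = z then q a else 0)
        = (∑ x' : 𝒳, q (x', y, z)) * (∑ y'' : 𝒴, q (x, y'', z)) := by
    intro x y
    have h := hM y z x
    have e1 : (∑ a : 𝒳 × 𝒴 × 𝒵, if a.2.1 = y ∧ a.2.2 = z ∧ a.1 = x then q a else 0)
        = q (x, y, z) :=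
      sum_if_single (p := fun a : 𝒳 × 𝒴 × 𝒵 => a.2.1 = y ∧ a.2.2 = z ∧ a.1 = x)
        (b := (x, y, z)) (fun a => by
          obtain ⟨a1, a2, a3⟩ := a; simp [Prod.ext_iff]; tauto) q
    have e2 : (∑ a : 𝒳 × 𝒴 × 𝒵, if a.2.1 = y ∧ a.2.2 = z then q a else 0)
        = ∑ x' : 𝒳, q (x', y, z) := by
      rw [Fintype.sum_prod_type]
      refine Finset.sum_congr rfl fun x' _ => ?_
      exact sum_if_single (p := fun p : 𝒴 × 𝒵 => p.1 = y ∧ p.2 = z) (b := (y, z))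
        (fun p => by obtain ⟨p1, p2⟩ := p; simp [Prod.ext_iff]) (fun p => q (x', p))
    have e3 : (∑ a : 𝒳 × 𝒴 × 𝒵, if a.2.2 = z ∧ a.1 = x then q a else 0)
        = ∑ y'' : 𝒴, q (x, y'', z) := by
      rw [Fintype.sum_prod_type, Finset.sum_comm]
      have inner : ∀ p : 𝒴 × 𝒵,
          (∑ x' : 𝒳, if p.2 = z ∧ x' = x then q (x', p) else 0)
            = if p.2 = z then q (x, p) else 0 := by
        intro p
        by_cases hpz : p.2 = z
        · rw [if_pos hpz]
          exact sum_if_single (fun x' => by simp [hpz]) (fun x' => q (x', p))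
        · rw [if_neg hpz]
          exact Finset.sum_eq_zero fun x' _ => if_neg (by tauto)
      rw [Finset.sum_congr rfl fun p _ => inner p]
      rw [Fintype.sum_prod_type]
      refine Finset.sum_congr rfl fun y'' _ => ?_
      exact sum_if_single (p := fun z' : 𝒵 => z' = z) (b := z) (fun z' => Iff.rfl)
        (fun z' => q (x, y'', z'))
    rw [e1, e2, e3] at h
    exact h
  by_cases hz : (∑ a : 𝒳 × 𝒴 × 𝒵, if a.2.2 = z then q a else 0) = 0
  · have hall : ∀ (x0 : 𝒳) (y0 : 𝒴), q (x0, y0, z) = 0 := by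
      intro x0 y0
      have := (Finset.sum_eq_zero_iff_of_nonneg (fun a _ => by
        by_cases h : (a : 𝒳 × 𝒴 × 𝒵).2.2 = z
        · rw [if_pos h]; exact hq0 a
        · rw [if_neg h])).mp hz (x0, y0, z) (Finset.mem_univ _)
      simpa using this
    rw [hall x y, hall x y', zero_mul, zero_mul]
  · apply mul_right_cancel₀ hz
    calc q (x, y, z) * (∑ x' : 𝒳, q (x', y', z)) * (∑ a : 𝒳 × 𝒴 × 𝒵, if a.2.2 = z then q a else 0)
        = (q (x, y, z) * (∑ a : 𝒳 × 𝒴 × 𝒵, if a.2.2 = z then q a else 0)) * (∑ x' : 𝒳, q (x', y', z)) := by ring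
      _ = ((∑ x' : 𝒳, q (x', y, z)) * (∑ y'' : 𝒴, q (x, y'', z))) * (∑ x' : 𝒳, q (x', y', z)) := by rw [hM' x y]
      _ = (q (x, y', z) * (∑ a : 𝒳 × 𝒴 × 𝒵, if a.2.2 = z then q a else 0)) * (∑ x' : 𝒳, q (x', y, z)) := by
            rw [hM' x y']; ring
      _ = q (x, y', z) * (∑ x' : 𝒳, q (x', y, z)) * (∑ a : 𝒳 × 𝒴 × 𝒵, if a.2.2 = z then q a else 0) := by ring

/-- x-condition: matches `a` below `i` and `bx` at and above `i`. -/
def pxAllP {𝒳 : Type*} {n : ℕ} (i : Fin n) (a : {j : Fin n // j < i} → 𝒳)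
    (bx : {j : Fin n // i ≤ j} → 𝒳) : Fin n → 𝒳 → Prop :=
  fun j xj => (∀ h : j < i, xj = a ⟨j, h⟩) ∧ (∀ h : i ≤ j, xj = bx ⟨j, h⟩)

/-- x-condition: matches `bx` at and above `i`. -/
def pxHiP {𝒳 : Type*} {n : ℕ} (i : Fin n) (bx : {j : Fin n // i ≤ j} → 𝒳) :
    Fin n → 𝒳 → Prop :=
  fun j xj => ∀ h : i ≤ j, xj = bx ⟨j, h⟩

/-- z-condition: matches `bz` below `i` and equals `cz` at `i`. -/
def pzAllP {𝒵 : Type*} {n : ℕ} (i : Fin n) (bz : {j : Fin n // j < i} → 𝒵) (cz : 𝒵) :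
    Fin n → 𝒵 → Prop :=
  fun j zj => (∀ h : j < i, zj = bz ⟨j, h⟩) ∧ (j = i → zj = cz)

/-- z-condition: matches `bz` below `i`. -/
def pzLoP {𝒵 : Type*} {n : ℕ} (i : Fin n) (bz : {j : Fin n // j < i} → 𝒵) :
    Fin n → 𝒵 → Prop :=
  fun j zj => ∀ h : j < i, zj = bz ⟨j, h⟩

/-- y-condition: `f1 y = t` and `y i = cy`. -/
def pyAllP {𝒴 τ₁ : Type*} {n : ℕ} (f1 : (Fin n → 𝒴) → τ₁) (t : τ₁) (i : Fin n) (cy : 𝒴) :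
    (Fin n → 𝒴) → Prop :=
  fun y => f1 y = t ∧ y i = cy

/-- y-condition: `f1 y = t`. -/
def pyTP {𝒴 τ₁ : Type*} {n : ℕ} (f1 : (Fin n → 𝒴) → τ₁) (t : τ₁) : (Fin n → 𝒴) → Prop :=
  fun y => f1 y = t

lemma final_cross {Y : Type*} [Fintype Y] (p1 p2 : Y → Prop)
    [DecidablePred p1] [DecidablePred p2] (F11 F22 F12 F21 : Y → ℝ)
    (hcross : ∀ y y', F11 y * F22 y' = F12 y' * F21 y) :
    (∑ y, if p1 y then F11 y else 0) * (∑ y, if p2 y then F22 y else 0)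
      = (∑ y, if p2 y then F12 y else 0) * (∑ y, if p1 y then F21 y else 0) := by
  rw [Finset.sum_mul_sum, Finset.sum_mul_sum, Finset.sum_comm]
  refine Finset.sum_congr rfl fun y' _ => Finset.sum_congr rfl fun y _ => ?_
  by_cases h1 : p1 y
  · by_cases h2 : p2 y'
    · rw [if_pos h1, if_pos h2, if_pos h2, if_pos h1]; exact hcross y y'
    · rw [if_neg h2, if_neg h2, mul_zero, zero_mul]
  · rw [if_neg h1, if_neg h1, zero_mul, mul_zero]

/-- For i.i.d. triples `(X_j,Y_j,Z_j) ~ q` with the single-letter Markov chain `Y - Z - X`, and `T₁ = f₁(Yⁿ)`, the Markov chain `X^{i-1} - (Z^{i-1}, T₁, X_iⁿ) - (Z_i, Y_i)` holds. -/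
theorem markov_stmt9
    {𝒳 𝒴 𝒵 : Type*} [Fintype 𝒳] [Fintype 𝒴] [Fintype 𝒵] {n : ℕ}
    (q : 𝒳 × 𝒴 × 𝒵 → ℝ) (hq0 : ∀ a, 0 ≤ q a) (hq1 : ∑ a, q a = 1)
    (hMarkov : CondIndepPmf q (fun a => a.2.1) (fun a => a.2.2) (fun a => a.1))
    {τ₁ : Type*}
    (f1 : (Fin n → 𝒴) → τ₁)
    (i : Fin n) :
    CondIndepPmf
      (fun ω : (Fin n → 𝒳) × (Fin n → 𝒴) × (Fin n → 𝒵) =>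
        ∏ j, q (ω.1 j, ω.2.1 j, ω.2.2 j))
      (fun ω => (fun j : {j : Fin n // j < i} => ω.1 j))
      (fun ω => ((fun j : {j : Fin n // j < i} => ω.2.2 j), f1 ω.2.1, (fun j : {j : Fin n // i ≤ j} => ω.1 j)))
      (fun ω => (ω.2.2 i, ω.2.1 i)) := by
  intro a b c
  obtain ⟨bz, t, bx⟩ := b
  obtain ⟨cz, cy⟩ := c
  simp only [Prod.mk.injEq]
  have E1 : (∑ x : (Fin n → 𝒳) × (Fin n → 𝒴) × (Fin n → 𝒵),
        if (fun j : {j : Fin n // j < i} => x.1 ↑j) = a ∧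
              ((fun j : {j : Fin n // j < i} => x.2.2 ↑j) = bz ∧ f1 x.2.1 = t ∧
                (fun j : {j : Fin n // i ≤ j} => x.1 ↑j) = bx) ∧ x.2.2 i = cz ∧ x.2.1 i = cy then
          ∏ j : Fin n, q (x.1 j, x.2.1 j, x.2.2 j) else 0)
      = ∑ y : Fin n → 𝒴, if pyAllP f1 t i cy y then
          ∏ j, ∑ x : 𝒳, ∑ z : 𝒵,
            if pxAllP i a bx j x ∧ pzAllP i bz cz j z then q (x, y j, z) else 0
        else 0 := by
    refine (Finset.sum_congr rfl fun ω _ => if_congr ?_ rfl rfl).trans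
      (reduce q (pxAllP i a bx) (pzAllP i bz cz) (pyAllP f1 t i cy))
    constructor
    · rintro ⟨hA, ⟨hBz, hBt, hBx⟩, hcz, hcy⟩
      exact ⟨⟨hBt, hcy⟩,
        fun j => ⟨fun h => congrFun hA ⟨j, h⟩, fun h => congrFun hBx ⟨j, h⟩⟩,
        fun j => ⟨fun h => congrFun hBz ⟨j, h⟩, fun h => by rw [h]; exact hcz⟩⟩
    · rintro ⟨⟨hBt, hcy⟩, hx, hz⟩
      exact ⟨funext fun j => (hx j).1 j.2, ⟨funext fun j => (hz j).1 j.2, hBt,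
        funext fun j => (hx j).2 j.2⟩, (hz i).2 rfl, hcy⟩
  have E2 : (∑ x : (Fin n → 𝒳) × (Fin n → 𝒴) × (Fin n → 𝒵),
        if (fun j : {j : Fin n // j < i} => x.2.2 ↑j) = bz ∧ f1 x.2.1 = t ∧
            (fun j : {j : Fin n // i ≤ j} => x.1 ↑j) = bx then
          ∏ j : Fin n, q (x.1 j, x.2.1 j, x.2.2 j) else 0)
      = ∑ y : Fin n → 𝒴, if pyTP f1 t y then
          ∏ j, ∑ x : 𝒳, ∑ z : 𝒵,
            if pxHiP i bx j x ∧ pzLoP i bz j z then q (x, y j, z) else 0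
        else 0 := by
    refine (Finset.sum_congr rfl fun ω _ => if_congr ?_ rfl rfl).trans
      (reduce q (pxHiP i bx) (pzLoP i bz) (pyTP f1 t))
    constructor
    · rintro ⟨hBz, hBt, hBx⟩
      exact ⟨hBt, fun j h => congrFun hBx ⟨j, h⟩, fun j h => congrFun hBz ⟨j, h⟩⟩
    · rintro ⟨hBt, hx, hz⟩
      exact ⟨funext fun j => hz j j.2, hBt, funext fun j => hx j j.2⟩
  have E3 : (∑ x : (Fin n → 𝒳) × (Fin n → 𝒴) × (Fin n → 𝒵),
        if (fun j : {j : Fin n // j < i} => x.1 ↑j) = a ∧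
            (fun j : {j : Fin n // j < i} => x.2.2 ↑j) = bz ∧ f1 x.2.1 = t ∧
            (fun j : {j : Fin n // i ≤ j} => x.1 ↑j) = bx then
          ∏ j : Fin n, q (x.1 j, x.2.1 j, x.2.2 j) else 0)
      = ∑ y : Fin n → 𝒴, if pyTP f1 t y then
          ∏ j, ∑ x : 𝒳, ∑ z : 𝒵,
            if pxAllP i a bx j x ∧ pzLoP i bz j z then q (x, y j, z) else 0
        else 0 := by
    refine (Finset.sum_congr rfl fun ω _ => if_congr ?_ rfl rfl).trans
      (reduce q (pxAllP i a bx) (pzLoP i bz) (pyTP f1 t))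
    constructor
    · rintro ⟨hA, hBz, hBt, hBx⟩
      exact ⟨hBt, fun j => ⟨fun h => congrFun hA ⟨j, h⟩, fun h => congrFun hBx ⟨j, h⟩⟩,
        fun j h => congrFun hBz ⟨j, h⟩⟩
    · rintro ⟨hBt, hx, hz⟩
      exact ⟨funext fun j => (hx j).1 j.2, funext fun j => hz j j.2, hBt,
        funext fun j => (hx j).2 j.2⟩
  have E4 : (∑ x : (Fin n → 𝒳) × (Fin n → 𝒴) × (Fin n → 𝒵),
        if ((fun j : {j : Fin n // j < i} => x.2.2 ↑j) = bz ∧ f1 x.2.1 = t ∧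
            (fun j : {j : Fin n // i ≤ j} => x.1 ↑j) = bx) ∧ x.2.2 i = cz ∧ x.2.1 i = cy then
          ∏ j : Fin n, q (x.1 j, x.2.1 j, x.2.2 j) else 0)
      = ∑ y : Fin n → 𝒴, if pyAllP f1 t i cy y then
          ∏ j, ∑ x : 𝒳, ∑ z : 𝒵,
            if pxHiP i bx j x ∧ pzAllP i bz cz j z then q (x, y j, z) else 0
        else 0 := by
    refine (Finset.sum_congr rfl fun ω _ => if_congr ?_ rfl rfl).trans
      (reduce q (pxHiP i bx) (pzAllP i bz cz) (pyAllP f1 t i cy))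
    constructor
    · rintro ⟨⟨hBz, hBt, hBx⟩, hcz, hcy⟩
      exact ⟨⟨hBt, hcy⟩, fun j h => congrFun hBx ⟨j, h⟩,
        fun j => ⟨fun h => congrFun hBz ⟨j, h⟩, fun h => by rw [h]; exact hcz⟩⟩
    · rintro ⟨⟨hBt, hcy⟩, hx, hz⟩
      exact ⟨⟨funext fun j => (hz j).1 j.2, hBt, funext fun j => hx j j.2⟩, (hz i).2 rfl, hcy⟩
  rw [E1, E2, E3, E4]
  -- per-coordinate cross identity
  have cross : ∀ (j : Fin n) (v v' : 𝒴),
      (∑ x : 𝒳, ∑ z : 𝒵, if pxAllP i a bx j x ∧ pzAllP i bz cz j z then q (x, v, z) else 0) *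
      (∑ x : 𝒳, ∑ z : 𝒵, if pxHiP i bx j x ∧ pzLoP i bz j z then q (x, v', z) else 0)
      = (∑ x : 𝒳, ∑ z : 𝒵, if pxAllP i a bx j x ∧ pzLoP i bz j z then q (x, v', z) else 0) *
      (∑ x : 𝒳, ∑ z : 𝒵, if pxHiP i bx j x ∧ pzAllP i bz cz j z then q (x, v, z) else 0) := by
    intro j v v'
    by_cases hj : j < i
    · have hnle : ¬ i ≤ j := not_le.mpr hj
      have hne : j ≠ i := ne_of_lt hj
      have ev11 : (∑ x : 𝒳, ∑ z : 𝒵,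
          if pxAllP i a bx j x ∧ pzAllP i bz cz j z then q (x, v, z) else 0)
          = q (a ⟨j, hj⟩, v, bz ⟨j, hj⟩) :=
        sum2_point (fun x z => by
          constructor
          · rintro ⟨⟨h1, _⟩, ⟨h3, _⟩⟩; exact ⟨h1 hj, h3 hj⟩
          · rintro ⟨hx, hz⟩
            exact ⟨⟨fun _ => hx, fun hle => (hnle hle).elim⟩,
              ⟨fun _ => hz, fun heq => (hne heq).elim⟩⟩) (fun x z => q (x, v, z))
      have ev22 : (∑ x : 𝒳, ∑ z : 𝒵,
          if pxHiP i bx j x ∧ pzLoP i bz j z then q (x, v', z) else 0)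
          = ∑ x : 𝒳, q (x, v', bz ⟨j, hj⟩) :=
        sum2_zpoint (fun x z => by
          constructor
          · rintro ⟨_, h⟩; exact h hj
          · intro h; exact ⟨fun hle => (hnle hle).elim, fun _ => h⟩) (fun x z => q (x, v', z))
      have ev12 : (∑ x : 𝒳, ∑ z : 𝒵,
          if pxAllP i a bx j x ∧ pzLoP i bz j z then q (x, v', z) else 0)
          = q (a ⟨j, hj⟩, v', bz ⟨j, hj⟩) :=
        sum2_point (fun x z => by
          constructor
          · rintro ⟨⟨h1, _⟩, h3⟩; exact ⟨h1 hj, h3 hj⟩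
          · rintro ⟨hx, hz⟩
            exact ⟨⟨fun _ => hx, fun hle => (hnle hle).elim⟩, fun _ => hz⟩)
          (fun x z => q (x, v', z))
      have ev21 : (∑ x : 𝒳, ∑ z : 𝒵,
          if pxHiP i bx j x ∧ pzAllP i bz cz j z then q (x, v, z) else 0)
          = ∑ x : 𝒳, q (x, v, bz ⟨j, hj⟩) :=
        sum2_zpoint (fun x z => by
          constructor
          · rintro ⟨_, ⟨h3, _⟩⟩; exact h3 hj
          · intro h
            exact ⟨fun hle => (hnle hle).elim, ⟨fun _ => h, fun heq => (hne heq).elim⟩⟩)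
          (fun x z => q (x, v, z))
      rw [ev11, ev22, ev12, ev21]
      exact markov_key q hq0 hMarkov (a ⟨j, hj⟩) v v' (bz ⟨j, hj⟩)
    · have exx : ∀ x, pxAllP i a bx j x ↔ pxHiP i bx j x := fun x =>
        ⟨fun h => h.2, fun h => ⟨fun hlt => (hj hlt).elim, h⟩⟩
      have eq1 : (∑ x : 𝒳, ∑ z : 𝒵,
          if pxAllP i a bx j x ∧ pzAllP i bz cz j z then q (x, v, z) else 0)
          = ∑ x : 𝒳, ∑ z : 𝒵, if pxHiP i bx j x ∧ pzAllP i bz cz j z then q (x, v, z) else 0 :=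
        Finset.sum_congr rfl fun x _ => Finset.sum_congr rfl fun z _ =>
          if_congr (and_congr_left' (exx x)) rfl rfl
      have eq2 : (∑ x : 𝒳, ∑ z : 𝒵,
          if pxAllP i a bx j x ∧ pzLoP i bz j z then q (x, v', z) else 0)
          = ∑ x : 𝒳, ∑ z : 𝒵, if pxHiP i bx j x ∧ pzLoP i bz j z then q (x, v', z) else 0 :=
        Finset.sum_congr rfl fun x _ => Finset.sum_congr rfl fun z _ =>
          if_congr (and_congr_left' (exx x)) rfl rfl
      rw [eq1, eq2]
      ring
  -- products cross identity
  have crossP : ∀ y y' : Fin n → 𝒴,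
      (∏ j, ∑ x : 𝒳, ∑ z : 𝒵, if pxAllP i a bx j x ∧ pzAllP i bz cz j z then q (x, y j, z) else 0) *
      (∏ j, ∑ x : 𝒳, ∑ z : 𝒵, if pxHiP i bx j x ∧ pzLoP i bz j z then q (x, y' j, z) else 0)
      = (∏ j, ∑ x : 𝒳, ∑ z : 𝒵, if pxAllP i a bx j x ∧ pzLoP i bz j z then q (x, y' j, z) else 0) *
      (∏ j, ∑ x : 𝒳, ∑ z : 𝒵, if pxHiP i bx j x ∧ pzAllP i bz cz j z then q (x, y j, z) else 0) := by
    intro y y'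
    rw [← Finset.prod_mul_distrib, ← Finset.prod_mul_distrib]
    exact Finset.prod_congr rfl fun j _ => cross j (y j) (y' j)
  exact final_cross (pyAllP f1 t i cy) (pyTP f1 t) _ _ _ _ crossP
end

section
/- Let (X_j, Y_j, Z_j), j = 1, ..., n, be i.i.d. triples of random variables with finite alphabets, each distributed according to a pmf p(x,y,z) satisfying the Markov chain Y - Z - X (Y and X conditionally independent given Z). Let T_1 = f_1(Y^n) and T = f(X^n, T_1) for deterministic functions f_1 and f. Then for every 1 ≤ i ≤ n, the Markov chain X_i - (X_{i+1}^n, T_1, Z^i, T) - Z_{i+1}^n holds, i.e., X_i and Z_{i+1}^n are conditionally independent given (X_{i+1}^n, T_1, Z^i, T). -/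
open scoped Classical
open Finset

section Aux
variable {Ω α β γ : Type*} [Fintype Ω] [Fintype α] [Fintype γ]

lemma collapse_any (F : Ω → ℝ) (C : Ω → γ) :
    ∑ ω, F ω = ∑ c, ∑ ω, (if C ω = c then F ω else 0) := by
  rw [Finset.sum_comm]
  exact Finset.sum_congr rfl fun ω _ => by simp

lemma condIndepPmf_of_factor (P : Ω → ℝ) (A : Ω → α) (B : Ω → β) (C : Ω → γ)
    (h : ∀ b : β, ∃ φ : α → ℝ, ∃ ψ : γ → ℝ, ∀ a c,
      (∑ ω, if A ω = a ∧ B ω = b ∧ C ω = c then P ω else 0) = φ a * ψ c) :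
    CondIndepPmf P A B C := by
  intro a b c
  obtain ⟨φ, ψ, hfac⟩ := h b
  have key : ∀ a', (∑ ω, if A ω = a' ∧ B ω = b then P ω else 0) = φ a' * ∑ c', ψ c' := by
    intro a'
    refine (collapse_any (fun ω => if A ω = a' ∧ B ω = b then P ω else 0) C).trans ?_
    rw [Finset.mul_sum]
    refine Finset.sum_congr rfl fun c' _ => ?_
    rw [← hfac a' c']
    refine Finset.sum_congr rfl fun ω _ => ?_
    by_cases h1 : A ω = a' ∧ B ω = b <;> by_cases h2 : C ω = c' <;>
      simp [h1, h2]
  have hbc : (∑ ω, if B ω = b ∧ C ω = c then P ω else 0) = (∑ a', φ a') * ψ c := by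
    refine (collapse_any (fun ω => if B ω = b ∧ C ω = c then P ω else 0) A).trans ?_
    rw [Finset.sum_mul]
    refine Finset.sum_congr rfl fun a' _ => ?_
    rw [← hfac a' c]
    refine Finset.sum_congr rfl fun ω _ => ?_
    by_cases h2 : A ω = a' <;> by_cases h3 : B ω = b <;> by_cases h4 : C ω = c <;>
      simp [h2, h3, h4]
  have hb : (∑ ω, if B ω = b then P ω else 0) = (∑ a', φ a') * (∑ c', ψ c') := by
    refine (collapse_any (fun ω => if B ω = b then P ω else 0) A).trans ?_
    rw [Finset.sum_mul]
    refine Finset.sum_congr rfl fun a' _ => ?_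
    rw [← key a']
    refine Finset.sum_congr rfl fun ω _ => ?_
    by_cases h1 : B ω = b <;> by_cases h2 : A ω = a' <;> simp [h1, h2]
  rw [hfac a c, key a, hbc, hb]
  ring
end Aux

section Marg
variable {𝒳 𝒴 𝒵 : Type*} [Fintype 𝒳] [Fintype 𝒴] [Fintype 𝒵]

noncomputable def margZ (q : 𝒳 × 𝒴 × 𝒵 → ℝ) (z : 𝒵) : ℝ := ∑ x, ∑ y, q (x, y, z)
noncomputable def margXZ (q : 𝒳 × 𝒴 × 𝒵 → ℝ) (x : 𝒳) (z : 𝒵) : ℝ := ∑ y, q (x, y, z)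
noncomputable def margYZ (q : 𝒳 × 𝒴 × 𝒵 → ℝ) (y : 𝒴) (z : 𝒵) : ℝ := ∑ x, q (x, y, z)

variable {q : 𝒳 × 𝒴 × 𝒵 → ℝ}

set_option linter.unusedSectionVars false

lemma margXZ_nonneg (hq0 : ∀ a, 0 ≤ q a) (x : 𝒳) (z : 𝒵) : 0 ≤ margXZ q x z :=
  Finset.sum_nonneg fun _ _ => hq0 _

lemma margYZ_nonneg (hq0 : ∀ a, 0 ≤ q a) (y : 𝒴) (z : 𝒵) : 0 ≤ margYZ q y z :=
  Finset.sum_nonneg fun _ _ => hq0 _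

lemma q_eq_zero (hq0 : ∀ a, 0 ≤ q a) {z : 𝒵} (hz : margZ q z = 0) (x : 𝒳) (y : 𝒴) :
    q (x, y, z) = 0 := by
  have h1 : margXZ q x z ≤ margZ q z := by
    have := Finset.single_le_sum (f := fun x' => margXZ q x' z)
      (fun x' _ => margXZ_nonneg hq0 x' z) (Finset.mem_univ x)
    simpa [margZ, margXZ] using this
  have h2 : q (x, y, z) ≤ margXZ q x z :=
    Finset.single_le_sum (f := fun y' => q (x, y', z)) (fun y' _ => hq0 _) (Finset.mem_univ y)
  exact le_antisymm (h2.trans (h1.trans_eq hz)) (hq0 _)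

lemma margXZ_eq_zero (hq0 : ∀ a, 0 ≤ q a) {z : 𝒵} (hz : margZ q z = 0) (x : 𝒳) :
    margXZ q x z = 0 := by
  simp [margXZ, fun y => q_eq_zero hq0 hz x y]

lemma margYZ_eq_zero (hq0 : ∀ a, 0 ≤ q a) {z : 𝒵} (hz : margZ q z = 0) (y : 𝒴) :
    margYZ q y z = 0 := by
  simp [margYZ, fun x => q_eq_zero hq0 hz x y]

lemma markov_pointwise
    (hM : CondIndepPmf q (fun a => a.2.1) (fun a => a.2.2) (fun a => a.1))
    (x : 𝒳) (y : 𝒴) (z : 𝒵) :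
    q (x, y, z) * margZ q z = margYZ q y z * margXZ q x z := by
  have h := hM y z x
  have e1 : (∑ ω : 𝒳 × 𝒴 × 𝒵, if ω.2.1 = y ∧ ω.2.2 = z ∧ ω.1 = x then q ω else 0)
      = q (x, y, z) := by
    rw [Fintype.sum_prod_type]
    simp [Fintype.sum_prod_type, ite_and, Finset.sum_ite_eq, Finset.sum_ite_eq']
  have e2 : (∑ ω : 𝒳 × 𝒴 × 𝒵, if ω.2.2 = z then q ω else 0) = margZ q z := by
    rw [Fintype.sum_prod_type]
    simp [Fintype.sum_prod_type, ite_and, Finset.sum_ite_eq, Finset.sum_ite_eq', margZ]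
  have e3 : (∑ ω : 𝒳 × 𝒴 × 𝒵, if ω.2.1 = y ∧ ω.2.2 = z then q ω else 0) = margYZ q y z := by
    rw [Fintype.sum_prod_type]
    simp [Fintype.sum_prod_type, ite_and, Finset.sum_ite_eq, Finset.sum_ite_eq', margYZ]
  have e4 : (∑ ω : 𝒳 × 𝒴 × 𝒵, if ω.2.2 = z ∧ ω.1 = x then q ω else 0) = margXZ q x z := by
    rw [Fintype.sum_prod_type]
    simp only [Fintype.sum_prod_type, ite_and, Finset.sum_ite_eq, Finset.sum_ite_eq',
      Finset.mem_univ, if_true, margXZ]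
    rw [Finset.sum_comm]
    exact Finset.sum_congr rfl fun x2 _ => by simp
  rw [e1, e2, e3, e4] at h
  exact h
end Marg

section Splice
variable {𝒵 : Type*} {n : ℕ}

noncomputable def zSplice (i : Fin n) (zlo : {j : Fin n // j ≤ i} → 𝒵)
    (c : {j : Fin n // i < j} → 𝒵) (j : Fin n) : 𝒵 :=
  if h : j ≤ i then zlo ⟨j, h⟩ else c ⟨j, lt_of_not_ge h⟩

lemma zSplice_le (i : Fin n) (zlo : {j : Fin n // j ≤ i} → 𝒵)
    (c : {j : Fin n // i < j} → 𝒵) {j : Fin n} (h : j ≤ i) :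
    zSplice i zlo c j = zlo ⟨j, h⟩ := dif_pos h

lemma zSplice_gt (i : Fin n) (zlo : {j : Fin n // j ≤ i} → 𝒵)
    (c : {j : Fin n // i < j} → 𝒵) {j : Fin n} (h : i < j) :
    zSplice i zlo c j = c ⟨j, h⟩ := by
  have h' : ¬ j ≤ i := not_le.mpr h
  simp only [zSplice, dif_neg h']

lemma zSplice_iff (i : Fin n) (zlo : {j : Fin n // j ≤ i} → 𝒵)
    (c : {j : Fin n // i < j} → 𝒵) (z : Fin n → 𝒵) :
    ((fun j : {j : Fin n // j ≤ i} => z j) = zlo ∧ (fun j : {j : Fin n // i < j} => z j) = c)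
      ↔ z = zSplice i zlo c := by
  constructor
  · rintro ⟨h1, h2⟩
    funext j
    by_cases hj : j ≤ i
    · rw [zSplice_le i zlo c hj]; exact congrFun h1 ⟨j, hj⟩
    · rw [zSplice_gt i zlo c (lt_of_not_ge hj)]; exact congrFun h2 ⟨j, lt_of_not_ge hj⟩
  · rintro rfl
    exact ⟨funext fun j => zSplice_le i zlo c j.2, funext fun j => zSplice_gt i zlo c j.2⟩

lemma prod_split {M : Type*} [CommMonoid M] (i : Fin n) (g : Fin n → M) :
    ∏ j, g j = (∏ j : {j : Fin n // j ≤ i}, g j) * (∏ j : {j : Fin n // i < j}, g j) := by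
  have e1 : (∏ j : {j : Fin n // j ≤ i}, g j)
      = ∏ j ∈ Finset.univ.filter (fun j => j ≤ i), g j :=
    (Finset.prod_subtype _ (by simp) g).symm
  have e2 : (∏ j : {j : Fin n // i < j}, g j)
      = ∏ j ∈ Finset.univ.filter (fun j => ¬ j ≤ i), g j :=
    (Finset.prod_subtype _ (by simp [not_le]) g).symm
  rw [e1, e2, Finset.prod_filter_mul_prod_filter_not]
end Splice

lemma sum_if_eq_point {Z : Type*} [Fintype Z] (C : Prop) (z0 : Z) (F : Z → ℝ) :
    ∑ z : Z, (if C ∧ z = z0 then F z else 0) = if C then F z0 else 0 := by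
  by_cases h : C <;> simp [h]

/-- For i.i.d. triples `(X_j,Y_j,Z_j) ~ q` with the single-letter Markov chain `Y - Z - X`, `T₁ = f₁(Yⁿ)` and `T = f(Xⁿ, T₁)`, the Markov chain `X_i - (X_{i+1}ⁿ, T₁, Z^i, T) - Z_{i+1}ⁿ` holds. -/
theorem markov_stmt10
    {𝒳 𝒴 𝒵 : Type*} [Fintype 𝒳] [Fintype 𝒴] [Fintype 𝒵] {n : ℕ}
    (q : 𝒳 × 𝒴 × 𝒵 → ℝ) (hq0 : ∀ a, 0 ≤ q a) (hq1 : ∑ a, q a = 1)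
    (hMarkov : CondIndepPmf q (fun a => a.2.1) (fun a => a.2.2) (fun a => a.1))
    {τ₁ τ : Type*}
    (f1 : (Fin n → 𝒴) → τ₁) (f : (Fin n → 𝒳) → τ₁ → τ)
    (i : Fin n) :
    CondIndepPmf
      (fun ω : (Fin n → 𝒳) × (Fin n → 𝒴) × (Fin n → 𝒵) =>
        ∏ j, q (ω.1 j, ω.2.1 j, ω.2.2 j))
      (fun ω => ω.1 i)
      (fun ω => ((fun j : {j : Fin n // i < j} => ω.1 j), f1 ω.2.1, (fun j : {j : Fin n // j ≤ i} => ω.2.2 j), f ω.1 (f1 ω.2.1)))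
      (fun ω => (fun j : {j : Fin n // i < j} => ω.2.2 j)) := by
  apply condIndepPmf_of_factor
  rintro ⟨xhi, t1, zlo, t⟩
  refine ⟨fun a => ∑ x : Fin n → 𝒳,
      if x i = a ∧ (fun j : {j : Fin n // i < j} => x j) = xhi ∧ f x t1 = t
      then ∏ j : {j : Fin n // j ≤ i}, margXZ q (x j) (zlo j) else 0,
    fun c => (∏ j, margZ q (zSplice i zlo c j))⁻¹ *
      ((∏ j : {j : Fin n // i < j}, margXZ q (xhi j) (c j)) *
       (∑ y : Fin n → 𝒴, if f1 y = t1 then ∏ j, margYZ q (y j) (zSplice i zlo c j) else 0)),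
    fun a c => ?_⟩
  have hcond : ∀ (x : Fin n → 𝒳) (y : Fin n → 𝒴) (z : Fin n → 𝒵),
      (x i = a ∧ ((fun j : {j : Fin n // i < j} => x j), f1 y,
          (fun j : {j : Fin n // j ≤ i} => z j), f x (f1 y)) = (xhi, t1, zlo, t)
        ∧ (fun j : {j : Fin n // i < j} => z j) = c)
      ↔ (((x i = a ∧ (fun j : {j : Fin n // i < j} => x j) = xhi ∧ f x t1 = t) ∧ f1 y = t1)
          ∧ z = zSplice i zlo c) := by
    intro x y z
    rw [← zSplice_iff i zlo c z, Prod.mk.injEq, Prod.mk.injEq, Prod.mk.injEq]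
    constructor
    · rintro ⟨h1, ⟨h2, h3, h4, h5⟩, h6⟩
      subst h3
      exact ⟨⟨⟨h1, h2, h5⟩, rfl⟩, h4, h6⟩
    · rintro ⟨⟨⟨h1, h2, h5⟩, h3⟩, h4, h6⟩
      subst h3
      exact ⟨h1, ⟨h2, rfl, h4, h5⟩, h6⟩
  have stepA : (∑ ω : (Fin n → 𝒳) × (Fin n → 𝒴) × (Fin n → 𝒵),
      if ω.1 i = a ∧ ((fun j : {j : Fin n // i < j} => ω.1 j), f1 ω.2.1,
          (fun j : {j : Fin n // j ≤ i} => ω.2.2 j), f ω.1 (f1 ω.2.1)) = (xhi, t1, zlo, t)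
        ∧ (fun j : {j : Fin n // i < j} => ω.2.2 j) = c
      then ∏ j, q (ω.1 j, ω.2.1 j, ω.2.2 j) else 0)
      = ∑ x : Fin n → 𝒳, ∑ y : Fin n → 𝒴,
          if (x i = a ∧ (fun j : {j : Fin n // i < j} => x j) = xhi ∧ f x t1 = t) ∧ f1 y = t1
          then ∏ j, q (x j, y j, zSplice i zlo c j) else 0 := by
    rw [Fintype.sum_prod_type]
    refine Finset.sum_congr rfl fun x _ => ?_
    rw [Fintype.sum_prod_type]
    refine Finset.sum_congr rfl fun y _ => ?_
    refine Eq.trans (Finset.sum_congr rfl fun (z : Fin n → 𝒵) _ => if_congr (hcond x y z) rfl rfl) ?_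
    by_cases h : ((x i = a ∧ (fun j : {j : Fin n // i < j} => x j) = xhi ∧ f x t1 = t) ∧ f1 y = t1) <;>
      simp [h, Finset.sum_ite_eq']
  refine Eq.trans ?_ (stepA.trans ?_)
  · refine Finset.sum_congr rfl fun ω _ => ?_
    congr 1
  · show (∑ x : Fin n → 𝒳, ∑ y : Fin n → 𝒴,
        if (x i = a ∧ (fun j : {j : Fin n // i < j} => x j) = xhi ∧ f x t1 = t) ∧ f1 y = t1
        then ∏ j, q (x j, y j, zSplice i zlo c j) else 0)
      = (∑ x : Fin n → 𝒳,
          if x i = a ∧ (fun j : {j : Fin n // i < j} => x j) = xhi ∧ f x t1 = t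
          then ∏ j : {j : Fin n // j ≤ i}, margXZ q (x j) (zlo j) else 0) *
        ((∏ j, margZ q (zSplice i zlo c j))⁻¹ *
          ((∏ j : {j : Fin n // i < j}, margXZ q (xhi j) (c j)) *
           (∑ y : Fin n → 𝒴, if f1 y = t1 then ∏ j, margYZ q (y j) (zSplice i zlo c j) else 0)))
    by_cases hW : (∏ j, margZ q (zSplice i zlo c j)) = 0
    · -- degenerate case: some margZ vanishes
      obtain ⟨j0, -, hj0⟩ := Finset.prod_eq_zero_iff.mp hW
      have hS : (∑ x : Fin n → 𝒳, ∑ y : Fin n → 𝒴,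
          if (x i = a ∧ (fun j : {j : Fin n // i < j} => x j) = xhi ∧ f x t1 = t) ∧ f1 y = t1
          then ∏ j, q (x j, y j, zSplice i zlo c j) else 0) = 0 := by
        refine Finset.sum_eq_zero fun x _ => Finset.sum_eq_zero fun y _ => ?_
        have h0 : (∏ j, q (x j, y j, zSplice i zlo c j)) = 0 :=
          Finset.prod_eq_zero (Finset.mem_univ j0) (q_eq_zero hq0 hj0 _ _)
        simp [h0]
      have hKY : (∏ j : {j : Fin n // i < j}, margXZ q (xhi j) (c j)) *
          (∑ y : Fin n → 𝒴, if f1 y = t1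
            then ∏ j, margYZ q (y j) (zSplice i zlo c j) else 0) = 0 := by
        by_cases hj : j0 ≤ i
        · have hy : (∑ y : Fin n → 𝒴, if f1 y = t1
              then ∏ j, margYZ q (y j) (zSplice i zlo c j) else 0) = 0 := by
            refine Finset.sum_eq_zero fun y _ => ?_
            have h0 : (∏ j, margYZ q (y j) (zSplice i zlo c j)) = 0 :=
              Finset.prod_eq_zero (Finset.mem_univ j0) (margYZ_eq_zero hq0 hj0 _)
            simp [h0]
          rw [hy, mul_zero]
        · have hlt : i < j0 := lt_of_not_ge hj
          have hz : margZ q (c ⟨j0, hlt⟩) = 0 := by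
            rw [← zSplice_gt i zlo c hlt]; exact hj0
          have hK : (∏ j : {j : Fin n // i < j}, margXZ q (xhi j) (c j)) = 0 :=
            Finset.prod_eq_zero (Finset.mem_univ ⟨j0, hlt⟩) (margXZ_eq_zero hq0 hz _)
          rw [hK, zero_mul]
      rw [hS, hKY, mul_zero, mul_zero]
    · -- main case: all margZ nonzero
      have key : (∑ x : Fin n → 𝒳, ∑ y : Fin n → 𝒴,
          if (x i = a ∧ (fun j : {j : Fin n // i < j} => x j) = xhi ∧ f x t1 = t) ∧ f1 y = t1
          then ∏ j, q (x j, y j, zSplice i zlo c j) else 0) * (∏ j, margZ q (zSplice i zlo c j))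
          = ((∑ x : Fin n → 𝒳,
              if x i = a ∧ (fun j : {j : Fin n // i < j} => x j) = xhi ∧ f x t1 = t
              then ∏ j : {j : Fin n // j ≤ i}, margXZ q (x j) (zlo j) else 0) *
             (∏ j : {j : Fin n // i < j}, margXZ q (xhi j) (c j))) *
            (∑ y : Fin n → 𝒴, if f1 y = t1
              then ∏ j, margYZ q (y j) (zSplice i zlo c j) else 0) := by
        rw [Finset.sum_mul]
        have step1 : ∀ x : Fin n → 𝒳,
            (∑ y : Fin n → 𝒴,
              if (x i = a ∧ (fun j : {j : Fin n // i < j} => x j) = xhi ∧ f x t1 = t) ∧ f1 y = t1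
              then ∏ j, q (x j, y j, zSplice i zlo c j) else 0) * (∏ j, margZ q (zSplice i zlo c j))
            = (if x i = a ∧ (fun j : {j : Fin n // i < j} => x j) = xhi ∧ f x t1 = t
                then (∏ j : {j : Fin n // j ≤ i}, margXZ q (x j) (zlo j)) *
                  (∏ j : {j : Fin n // i < j}, margXZ q (xhi j) (c j)) else 0) *
              (∑ y : Fin n → 𝒴, if f1 y = t1
                then ∏ j, margYZ q (y j) (zSplice i zlo c j) else 0) := by
          intro x
          by_cases hx : x i = a ∧ (fun j : {j : Fin n // i < j} => x j) = xhi ∧ f x t1 = t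
          · simp only [hx, true_and, if_true]
            rw [Finset.sum_mul, Finset.mul_sum]
            refine Finset.sum_congr rfl fun y _ => ?_
            by_cases hy : f1 y = t1
            · simp only [hy, if_true]
              -- (∏ q) * (∏ margZ) = (Lo * Hi) * (∏ margYZ)
              rw [← Finset.prod_mul_distrib]
              have hmark : ∀ j : Fin n,
                  q (x j, y j, zSplice i zlo c j) * margZ q (zSplice i zlo c j)
                  = margYZ q (y j) (zSplice i zlo c j) * margXZ q (x j) (zSplice i zlo c j) :=
                fun j => markov_pointwise hMarkov _ _ _
              rw [Finset.prod_congr rfl fun j _ => hmark j, Finset.prod_mul_distrib]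
              have hxprod : (∏ j, margXZ q (x j) (zSplice i zlo c j))
                  = (∏ j : {j : Fin n // j ≤ i}, margXZ q (x j) (zlo j)) *
                    (∏ j : {j : Fin n // i < j}, margXZ q (xhi j) (c j)) := by
                rw [prod_split i (fun j => margXZ q (x j) (zSplice i zlo c j))]
                congr 1
                · exact Finset.prod_congr rfl fun j _ => by rw [zSplice_le i zlo c j.2]
                · refine Finset.prod_congr rfl fun j _ => ?_
                  rw [zSplice_gt i zlo c j.2, congrFun hx.2.1 j]
              rw [hxprod]
              ring
            · simp [hy]
          · simp [hx]
        rw [Finset.sum_congr rfl fun x _ => step1 x, ← Finset.sum_mul]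
        congr 1
        rw [Finset.sum_mul]
        refine Finset.sum_congr rfl fun x _ => ?_
        by_cases hx : x i = a ∧ (fun j : {j : Fin n // i < j} => x j) = xhi ∧ f x t1 = t <;>
          simp [hx]
      have hrw : (∑ x : Fin n → 𝒳, ∑ y : Fin n → 𝒴,
          if (x i = a ∧ (fun j : {j : Fin n // i < j} => x j) = xhi ∧ f x t1 = t) ∧ f1 y = t1
          then ∏ j, q (x j, y j, zSplice i zlo c j) else 0)
          = ((∑ x : Fin n → 𝒳, ∑ y : Fin n → 𝒴,
          if (x i = a ∧ (fun j : {j : Fin n // i < j} => x j) = xhi ∧ f x t1 = t) ∧ f1 y = t1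
          then ∏ j, q (x j, y j, zSplice i zlo c j) else 0) * (∏ j, margZ q (zSplice i zlo c j)))
            * (∏ j, margZ q (zSplice i zlo c j))⁻¹ := by
        rw [mul_assoc, mul_inv_cancel₀ hW, mul_one]
      rw [hrw, key]
      ring
end

section
/- Let (X_j, Y_j, Z_j), j = 1, ..., n, be i.i.d. triples of random variables with finite alphabets, each distributed according to a pmf p(x,y,z) satisfying the Markov chain Y - X - Z (Y and Z conditionally independent given X). Let T_1 = f_1(Y^n) and T_2 = f_2(Z^n, T_1) for deterministic functions f_1 and f_2. Then for every 1 ≤ i ≤ n, the Markov chain X_i - (X^{i-1}, Z_i^n, T_1, T_2) - Z^{i-1} holds, i.e., X_i and Z^{i-1} are conditionally independent given (X^{i-1}, Z_i^n, T_1, T_2). -/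
open scoped Classical
open Finset

lemma sum_ite_push' {α : Type*} (s : Finset α) (p : Prop) [Decidable p] (f : α → ℝ) :
    (∑ x ∈ s, if p then f x else 0) = if p then ∑ x ∈ s, f x else 0 := by
  split <;> simp

lemma ite_mul_ite_eq' {p1 p2 p3 p4 : Prop} {d1 : Decidable p1} {d2 : Decidable p2}
    {d3 : Decidable p3} {d4 : Decidable p4} (h : p1 ∧ p2 ↔ p3 ∧ p4) {u v w t : ℝ} (huv : p1 → p2 → u * v = w * t) :
    (if p1 then u else 0) * (if p2 then v else 0) =
      (if p3 then w else 0) * (if p4 then t else 0) := by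
  by_cases h1 : p1 <;> by_cases h2 : p2
  · have h34 := h.mp ⟨h1, h2⟩
    rw [if_pos h1, if_pos h2, if_pos h34.1, if_pos h34.2]
    exact huv h1 h2
  all_goals
    have h34 : ¬ (p3 ∧ p4) := fun hc => by have := h.mpr hc; tauto
  all_goals rcases not_and_or.mp h34 with h3 | h3 <;> simp [h1, h2, h3]

/-- For i.i.d. triples `(X_j,Y_j,Z_j) ~ q` with the single-letter Markov chain `Y - X - Z`, `T₁ = f₁(Yⁿ)` and `T₂ = f₂(Zⁿ, T₁)`, the Markov chain `X_i - (X^{i-1}, Z_iⁿ, T₁, T₂) - Z^{i-1}` holds. -/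
theorem markov_stmt11
    {𝒳 𝒴 𝒵 : Type*} [Fintype 𝒳] [Fintype 𝒴] [Fintype 𝒵] {n : ℕ}
    (q : 𝒳 × 𝒴 × 𝒵 → ℝ) (hq0 : ∀ a, 0 ≤ q a) (hq1 : ∑ a, q a = 1)
    (hMarkov : CondIndepPmf q (fun a => a.2.1) (fun a => a.1) (fun a => a.2.2))
    {τ₁ τ₂ : Type*}
    (f1 : (Fin n → 𝒴) → τ₁) (f2 : (Fin n → 𝒵) → τ₁ → τ₂)
    (i : Fin n) :
    CondIndepPmf
      (fun ω : (Fin n → 𝒳) × (Fin n → 𝒴) × (Fin n → 𝒵) =>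
        ∏ j, q (ω.1 j, ω.2.1 j, ω.2.2 j))
      (fun ω => ω.1 i)
      (fun ω => ((fun j : {j : Fin n // j < i} => ω.1 j), (fun j : {j : Fin n // i ≤ j} => ω.2.2 j), f1 ω.2.1, f2 ω.2.2 (f1 ω.2.1)))
      (fun ω => (fun j : {j : Fin n // j < i} => ω.2.2 j)) := by
  classical
  -- marginal computations
  have e1 : ∀ x y z, (∑ ω : 𝒳 × 𝒴 × 𝒵, if ω.2.1 = y ∧ ω.1 = x ∧ ω.2.2 = z then q ω else 0)
      = q (x, y, z) := by
    intro x y z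
    simp [Fintype.sum_prod_type, ite_and, sum_ite_push', Finset.sum_ite_eq',
      Finset.sum_ite_eq]
  have e2 : ∀ x, (∑ ω : 𝒳 × 𝒴 × 𝒵, if ω.1 = x then q ω else 0)
      = ∑ y, ∑ z, q (x, y, z) := by
    intro x
    rw [Fintype.sum_prod_type]
    rw [Finset.sum_eq_single x]
    · simp [Fintype.sum_prod_type]
    · intro b _ hb; simp [hb]
    · intro h; exact absurd (Finset.mem_univ x) h
  have e3 : ∀ x y, (∑ ω : 𝒳 × 𝒴 × 𝒵, if ω.2.1 = y ∧ ω.1 = x then q ω else 0)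
      = ∑ z, q (x, y, z) := by
    intro x y
    rw [Fintype.sum_prod_type]
    rw [Finset.sum_eq_single x]
    · rw [Fintype.sum_prod_type]
      rw [Finset.sum_eq_single y]
      · simp
      · intro b _ hb; simp [hb]
      · intro h; exact absurd (Finset.mem_univ y) h
    · intro b _ hb; simp [hb]
    · intro h; exact absurd (Finset.mem_univ x) h
  have e4 : ∀ x z, (∑ ω : 𝒳 × 𝒴 × 𝒵, if ω.1 = x ∧ ω.2.2 = z then q ω else 0)
      = ∑ y, q (x, y, z) := by
    intro x z
    simp [Fintype.sum_prod_type, ite_and, sum_ite_push', Finset.sum_ite_eq',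
      Finset.sum_ite_eq]
  -- pointwise Markov identity
  have hpt : ∀ x y z, q (x, y, z) * (∑ y', ∑ z', q (x, y', z')) =
      (∑ z', q (x, y, z')) * (∑ y', q (x, y', z)) := by
    intro x y z
    have h := hMarkov y x z
    simp only at h
    rw [e1, e2, e3, e4] at h
    exact h
  -- pointwise exchange identity
  have hswap : ∀ x y y' z z', q (x, y, z) * q (x, y', z') = q (x, y, z') * q (x, y', z) := by
    intro x y y' z z'
    by_cases hmx : (∑ y'', ∑ z'', q (x, y'', z'')) = 0
    · have hz : ∀ y0 z0, q (x, y0, z0) = 0 := by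
        intro y0 z0
        have hle : q (x, y0, z0) ≤ ∑ y'', ∑ z'', q (x, y'', z'') := by
          calc q (x, y0, z0) ≤ ∑ z'', q (x, y0, z'') :=
                Finset.single_le_sum (f := fun z'' => q (x, y0, z''))
                  (fun _ _ => hq0 _) (Finset.mem_univ z0)
            _ ≤ ∑ y'', ∑ z'', q (x, y'', z'') :=
                Finset.single_le_sum (f := fun y'' => ∑ z'', q (x, y'', z''))
                  (fun _ _ => Finset.sum_nonneg fun _ _ => hq0 _) (Finset.mem_univ y0)
        exact le_antisymm (hmx ▸ hle) (hq0 _)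
      simp [hz]
    · apply mul_right_cancel₀ (mul_ne_zero hmx hmx)
      calc q (x, y, z) * q (x, y', z') *
            ((∑ y'', ∑ z'', q (x, y'', z'')) * (∑ y'', ∑ z'', q (x, y'', z'')))
          = (q (x, y, z) * (∑ y'', ∑ z'', q (x, y'', z''))) *
            (q (x, y', z') * (∑ y'', ∑ z'', q (x, y'', z''))) := by ring
        _ = ((∑ z', q (x, y, z')) * (∑ y'', q (x, y'', z))) *
            ((∑ z'', q (x, y', z'')) * (∑ y'', q (x, y'', z'))) := by rw [hpt, hpt]
        _ = ((∑ z'', q (x, y, z'')) * (∑ y'', q (x, y'', z'))) *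
            ((∑ z'', q (x, y', z'')) * (∑ y'', q (x, y'', z))) := by ring
        _ = (q (x, y, z') * (∑ y'', ∑ z'', q (x, y'', z''))) *
            (q (x, y', z) * (∑ y'', ∑ z'', q (x, y'', z''))) := by rw [hpt, hpt]
        _ = q (x, y, z') * q (x, y', z) *
            ((∑ y'', ∑ z'', q (x, y'', z'')) * (∑ y'', ∑ z'', q (x, y'', z''))) := by ring
  -- main argument
  intro a b c
  obtain ⟨b1, b2, t1, t2⟩ := b
  have key : ∀ (F G : ((Fin n → 𝒳) × (Fin n → 𝒴) × (Fin n → 𝒵)) → ℝ),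
      (∑ ω, F ω) * (∑ ω, G ω) = ∑ p : (((Fin n → 𝒳) × (Fin n → 𝒴) × (Fin n → 𝒵)) ×
        ((Fin n → 𝒳) × (Fin n → 𝒴) × (Fin n → 𝒵))), F p.1 * G p.2 := by
    intro F G
    rw [Finset.sum_mul_sum]
    exact (Fintype.sum_prod_type' (fun ω ω' => F ω * G ω')).symm
  rw [key, key]
  refine Fintype.sum_bijective
    (fun p => ((p.1.1, p.1.2.1, p.2.2.2), (p.2.1, p.2.2.1, p.1.2.2)))
    (Function.Involutive.bijective fun p => rfl) _ _ ?_
  rintro ⟨⟨x, yv, zv⟩, x', yv', zv'⟩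
  dsimp only
  refine ite_mul_ite_eq' ?_ ?_
  · constructor
    · rintro ⟨⟨h1, hB, h6⟩, hB'⟩
      simp only [Prod.mk.injEq] at hB hB' ⊢
      obtain ⟨h2, h3, h4, h5⟩ := hB
      obtain ⟨g2, g3, g4, g5⟩ := hB'
      refine ⟨⟨h1, ⟨h2, g3, h4, ?_⟩⟩, ⟨⟨g2, h3, g4, ?_⟩, h6⟩⟩
      · rw [h4, ← g4]; exact g5
      · rw [g4, ← h4]; exact h5
    · rintro ⟨⟨h1, hB⟩, hB', h6⟩
      simp only [Prod.mk.injEq] at hB hB' ⊢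
      obtain ⟨h2, g3, h4, k5⟩ := hB
      obtain ⟨g2, h3, g4, k5'⟩ := hB'
      refine ⟨⟨h1, ⟨h2, h3, h4, ?_⟩, h6⟩, ⟨g2, g3, g4, ?_⟩⟩
      · rw [h4, ← g4]; exact k5'
      · rw [g4, ← h4]; exact k5
  · rintro ⟨h1, hB, h6⟩ hB'
    simp only [Prod.mk.injEq] at hB hB'
    obtain ⟨h2, h3, h4, h5⟩ := hB
    obtain ⟨g2, g3, g4, g5⟩ := hB'
    rw [← Finset.prod_mul_distrib, ← Finset.prod_mul_distrib]
    refine Finset.prod_congr rfl fun j _ => ?_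
    rcases lt_or_ge j i with hj | hj
    · have ex : x j = x' j := by
        have u1 := congrFun h2 ⟨j, hj⟩
        have u2 := congrFun g2 ⟨j, hj⟩
        exact u1.trans u2.symm
      rw [ex]
      exact hswap (x' j) (yv j) (yv' j) (zv j) (zv' j)
    · have ez : zv j = zv' j := by
        have u1 := congrFun h3 ⟨j, hj⟩
        have u2 := congrFun g3 ⟨j, hj⟩
        exact u1.trans u2.symm
      rw [ez]
end

section
/- Let (X_j, Y_j, Z_j), j = 1, ..., n, be i.i.d. triples of random variables with finite alphabets, each distributed according to a pmf p(x,y,z) satisfying the Markov chain Y - X - Z (Y and Z conditionally independent given X). Let T_1 = f_1(Y^n) for a deterministic function f_1. Then for every 1 ≤ i ≤ n, the Markov chain Z^{i-1} - (T_1, X^{i-1}, Z_i^n) - (Y_i, X_i) holds, i.e., Z^{i-1} and the pair (Y_i, X_i) are conditionally independent given (T_1, X^{i-1}, Z_i^n). -/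
open scoped Classical
open Finset

/-!
The single-letter chain `Y - X - Z` factors the letter pmf as `q(x,y,z) = g(x,y) κ(x,z)`. Hence
the `n`-letter pmf is `∏_{j<i} κ(x_j, z_j)` times a function of `(Xⁿ, Yⁿ, Z_iⁿ)`: as a function
of `Z^{i-1}` it depends on the remaining coordinates only through `X^{i-1}`, which is part of the
conditioning variable. A pmf of the form `K(B w, u) R(w)` on `U × W` makes `u` conditionally
independent of any function of `w` given `B w`.
-/

theorem Fintype.sum_prod_ite_kernel_mul {U W β : Type*} [Fintype U] [Fintype W]
    (K : β → U → ℝ) (R : W → ℝ) (B : W → β) (b : β) (φ : U → Prop) (E : W → Prop) :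
    (∑ ω : U × W, if φ ω.1 ∧ B ω.2 = b ∧ E ω.2 then K (B ω.2) ω.1 * R ω.2 else 0) =
      (∑ u, if φ u then K b u else 0) * ∑ w, if B w = b ∧ E w then R w else 0 := by
  rw [Fintype.sum_prod_type, Finset.sum_mul_sum]
  refine Finset.sum_congr rfl fun u _ => Finset.sum_congr rfl fun w _ => ?_
  by_cases hφ : φ u <;> by_cases hw : B w = b ∧ E w <;> simp_all

theorem CondIndepPmf.of_kernel_mul {U W β γ : Type*} [Fintype U] [Fintype W]
    (K : β → U → ℝ) (R : W → ℝ) (B : W → β) (C : W → γ) :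
    CondIndepPmf (fun ω : U × W => K (B ω.2) ω.1 * R ω.2) Prod.fst (fun ω => B ω.2)
      (fun ω => C ω.2) := by
  intro a b c
  have h1 := Fintype.sum_prod_ite_kernel_mul K R B b (· = a) (C · = c)
  have h2 := Fintype.sum_prod_ite_kernel_mul K R B b (fun _ => True) (fun _ => True)
  have h3 := Fintype.sum_prod_ite_kernel_mul K R B b (· = a) (fun _ => True)
  have h4 := Fintype.sum_prod_ite_kernel_mul K R B b (fun _ => True) (C · = c)
  simp only [true_and, and_true] at h1 h2 h3 h4 ⊢
  rw [h1, h2, h3, h4]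
  ring

theorem CondIndepPmf.comp_equiv {Ω Ω' α β γ : Type*} [Fintype Ω] [Fintype Ω']
    {P : Ω → ℝ} {A : Ω → α} {B : Ω → β} {C : Ω → γ} (h : CondIndepPmf P A B C) (e : Ω' ≃ Ω) :
    CondIndepPmf (P ∘ e) (A ∘ e) (B ∘ e) (C ∘ e) := by
  intro a b c
  convert h a b c using 2 <;> exact Fintype.sum_equiv e _ _ fun _ => rfl

theorem CondIndepPmf.sum_joint_eq_mul_div {Ω α β γ : Type*} [Fintype Ω] {P : Ω → ℝ}
    {A : Ω → α} {B : Ω → β} {C : Ω → γ} (h : CondIndepPmf P A B C) (hP : ∀ ω, 0 ≤ P ω)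
    (a : α) (b : β) (c : γ) :
    (∑ ω, if A ω = a ∧ B ω = b ∧ C ω = c then P ω else 0) =
      (∑ ω, if A ω = a ∧ B ω = b then P ω else 0) *
        ((∑ ω, if B ω = b ∧ C ω = c then P ω else 0) / ∑ ω, if B ω = b then P ω else 0) := by
  by_cases hb : (∑ ω, if B ω = b then P ω else 0) = 0
  · have hle : (∑ ω, if A ω = a ∧ B ω = b ∧ C ω = c then P ω else 0) ≤
        ∑ ω, if B ω = b then P ω else 0 :=
      Finset.sum_le_sum fun ω _ => by split_ifs <;> simp_all
    have hnonneg : 0 ≤ ∑ ω, if A ω = a ∧ B ω = b ∧ C ω = c then P ω else 0 :=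
      Finset.sum_nonneg fun ω _ => by split_ifs <;> simp [hP]
    rw [hb, div_zero, mul_zero]
    linarith
  · rw [← mul_div_assoc, eq_div_iff hb]
    exact h a b c

theorem exists_mul_of_condIndepPmf {𝒳 𝒴 𝒵 : Type*} [Fintype 𝒳] [Fintype 𝒴] [Fintype 𝒵]
    {q : 𝒳 × 𝒴 × 𝒵 → ℝ} (hq0 : ∀ a, 0 ≤ q a)
    (hq : CondIndepPmf q (fun a => a.2.1) (fun a => a.1) (fun a => a.2.2)) :
    ∃ (g : 𝒳 → 𝒴 → ℝ) (κ : 𝒳 → 𝒵 → ℝ), ∀ x y z, q (x, y, z) = g x y * κ x z := by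
  refine ⟨fun x y => ∑ p, if p.2.1 = y ∧ p.1 = x then q p else 0,
    fun x z => (∑ p, if p.1 = x ∧ p.2.2 = z then q p else 0) / ∑ p, if p.1 = x then q p else 0,
    fun x y z => ?_⟩
  have hjoint : (∑ p : 𝒳 × 𝒴 × 𝒵, if p.2.1 = y ∧ p.1 = x ∧ p.2.2 = z then q p else 0) =
      q (x, y, z) := by
    have hp : ∀ p : 𝒳 × 𝒴 × 𝒵, (p.2.1 = y ∧ p.1 = x ∧ p.2.2 = z) ↔ p = (x, y, z) := by
      rintro ⟨x', y', z'⟩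
      simp only [Prod.mk.injEq]
      tauto
    simp only [hp, Finset.sum_ite_eq', Finset.mem_univ, if_true]
  rw [← hjoint, hq.sum_joint_eq_mul_div hq0 y x z]

theorem Fintype.prod_eq_prod_lt_mul_prod_ge {ι M : Type*} [Fintype ι] [LinearOrder ι]
    [CommMonoid M] (i : ι) (f : ι → M) :
    ∏ j, f j = (∏ j : {j // j < i}, f j) * ∏ j : {j // i ≤ j}, f j := by
  rw [← Fintype.prod_subtype_mul_prod_subtype (· < i) f]
  congr 1
  exact Fintype.prod_equiv (Equiv.subtypeEquivRight fun _ => not_lt) _ _ fun _ => rfl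

def prefixSplitEquiv {ι : Type*} [LinearOrder ι] (i : ι) (α β γ : Type*) :
    (ι → α) × (ι → β) × (ι → γ) ≃
      ({j // j < i} → γ) × (ι → α) × (ι → β) × ({j // i ≤ j} → γ) where
  toFun ω := (fun j => ω.2.2 j, ω.1, ω.2.1, fun j => ω.2.2 j)
  invFun p :=
    (p.2.1, p.2.2.1, fun j => if h : j < i then p.1 ⟨j, h⟩ else p.2.2.2 ⟨j, not_lt.mp h⟩)
  left_inv ω := by simp
  right_inv p := by
    ext j
    · simp [j.2]
    · rfl
    · rfl
    · simp [not_lt.mpr j.2]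

theorem prod_eq_prod_lt_kernel_mul {ι 𝒳 𝒴 𝒵 : Type*} [Fintype ι] [LinearOrder ι]
    {q : 𝒳 × 𝒴 × 𝒵 → ℝ} {g : 𝒳 → 𝒴 → ℝ} {κ : 𝒳 → 𝒵 → ℝ}
    (hq : ∀ x y z, q (x, y, z) = g x y * κ x z) (i : ι) (X : ι → 𝒳) (Y : ι → 𝒴) (Z : ι → 𝒵) :
    ∏ j, q (X j, Y j, Z j) = (∏ j : {j // j < i}, κ (X j) (Z j)) *
      ((∏ j : {j // j < i}, g (X j) (Y j)) * ∏ j : {j // i ≤ j}, q (X j, Y j, Z j)) := by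
  rw [Fintype.prod_eq_prod_lt_mul_prod_ge i, Finset.prod_congr rfl fun j _ => hq _ _ _,
    Finset.prod_mul_distrib]
  ring

theorem markov_stmt12_general
    {𝒳 𝒴 𝒵 : Type*} [Fintype 𝒳] [Fintype 𝒴] [Fintype 𝒵] {n : ℕ}
    (q : 𝒳 × 𝒴 × 𝒵 → ℝ) (hq0 : ∀ a, 0 ≤ q a)
    (hMarkov : CondIndepPmf q (fun a => a.2.1) (fun a => a.1) (fun a => a.2.2))
    {τ₁ : Type*}
    (f1 : (Fin n → 𝒴) → τ₁)
    (i : Fin n) :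
    CondIndepPmf
      (fun ω : (Fin n → 𝒳) × (Fin n → 𝒴) × (Fin n → 𝒵) =>
        ∏ j, q (ω.1 j, ω.2.1 j, ω.2.2 j))
      (fun ω => (fun j : {j : Fin n // j < i} => ω.2.2 j))
      (fun ω => (f1 ω.2.1, (fun j : {j : Fin n // j < i} => ω.1 j), (fun j : {j : Fin n // i ≤ j} => ω.2.2 j)))
      (fun ω => (ω.2.1 i, ω.1 i)) := by
  obtain ⟨g, κ, hq⟩ := exists_mul_of_condIndepPmf hq0 hMarkov
  have h := (CondIndepPmf.of_kernel_mul
    (fun b u => ∏ j : {j // j < i}, κ (b.2.1 j) (u j))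
    (fun w : (Fin n → 𝒳) × (Fin n → 𝒴) × ({j // i ≤ j} → 𝒵) =>
      (∏ j : {j // j < i}, g (w.1 j) (w.2.1 j)) *
        ∏ j : {j // i ≤ j}, q (w.1 j, w.2.1 j, w.2.2 j))
    (fun w => (f1 w.2.1, (fun j : {j // j < i} => w.1 j), w.2.2))
    (fun w => (w.2.1 i, w.1 i))).comp_equiv (prefixSplitEquiv i 𝒳 𝒴 𝒵)
  convert h using 1
  · exact funext fun ω => prod_eq_prod_lt_kernel_mul hq i ω.1 ω.2.1 ω.2.2
  all_goals rfl

/-- For i.i.d. triples `(X_j,Y_j,Z_j) ~ q` with the single-letter Markov chain `Y - X - Z`, and `T₁ = f₁(Yⁿ)`, the Markov chain `Z^{i-1} - (T₁, X^{i-1}, Z_iⁿ) - (Y_i, X_i)` holds. -/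
theorem markov_stmt12
    {𝒳 𝒴 𝒵 : Type*} [Fintype 𝒳] [Fintype 𝒴] [Fintype 𝒵] {n : ℕ}
    (q : 𝒳 × 𝒴 × 𝒵 → ℝ) (hq0 : ∀ a, 0 ≤ q a) (hq1 : ∑ a, q a = 1)
    (hMarkov : CondIndepPmf q (fun a => a.2.1) (fun a => a.1) (fun a => a.2.2))
    {τ₁ : Type*}
    (f1 : (Fin n → 𝒴) → τ₁)
    (i : Fin n) :
    CondIndepPmf
      (fun ω : (Fin n → 𝒳) × (Fin n → 𝒴) × (Fin n → 𝒵) =>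
        ∏ j, q (ω.1 j, ω.2.1 j, ω.2.2 j))
      (fun ω => (fun j : {j : Fin n // j < i} => ω.2.2 j))
      (fun ω => (f1 ω.2.1, (fun j : {j : Fin n // j < i} => ω.1 j), (fun j : {j : Fin n // i ≤ j} => ω.2.2 j)))
      (fun ω => (ω.2.1 i, ω.1 i)) :=
  markov_stmt12_general q hq0 hMarkov f1 i
end

section
/- Let (X_j, Y_j, Z_j), j = 1, ..., n, be i.i.d. triples of random variables with finite alphabets, each distributed according to a pmf p(x,y,z) satisfying the Markov chain Y - X - Z (Y and Z conditionally independent given X). Let T_1 = f_1(Y^n) and T_2 = f_2(Z^n, T_1) for deterministic functions f_1 and f_2. Then for every 1 ≤ i ≤ n, the Markov chain X_{i+1}^n - (T_1, T_2, X^i, Z_{i+1}^n, Y_i) - Z_i holds, i.e., X_{i+1}^n and Z_i are conditionally independent given (T_1, T_2, X^i, Z_{i+1}^n, Y_i). -/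
open scoped Classical
open Finset

set_option linter.unusedSectionVars false
set_option maxHeartbeats 1000000

attribute [-instance] Fintype.decidablePiFintype instDecidableEqProd

namespace Stmt13

variable {𝒳 𝒴 𝒵 : Type*} [Fintype 𝒳] [Fintype 𝒴] [Fintype 𝒵] {n : ℕ}

def combine (i : Fin n) (l : {j : Fin n // j ≤ i} → 𝒳) (u : {j : Fin n // i < j} → 𝒳) :
    Fin n → 𝒳 :=
  fun j => if h : i < j then u ⟨j, h⟩ else l ⟨j, le_of_not_gt h⟩

omit [Fintype 𝒳] in
lemma restrGT_combine (i : Fin n) (l : {j : Fin n // j ≤ i} → 𝒳) (u : {j : Fin n // i < j} → 𝒳) :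
    (fun j : {j : Fin n // i < j} => combine i l u j) = u :=
  funext fun j => dif_pos j.2

omit [Fintype 𝒳] in
lemma restrLE_combine (i : Fin n) (l : {j : Fin n // j ≤ i} → 𝒳) (u : {j : Fin n // i < j} → 𝒳) :
    (fun j : {j : Fin n // j ≤ i} => combine i l u j) = l :=
  funext fun j => dif_neg (not_lt.mpr j.2)

def splitEquiv {X : Type*} (i : Fin n) :
    (({j : Fin n // j ≤ i} → X) × ({j : Fin n // i < j} → X)) ≃ (Fin n → X) where
  toFun p := combine i p.1 p.2
  invFun x := (fun j => x j, fun j => x j)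
  left_inv p := by
    obtain ⟨l, u⟩ := p
    simp only [Prod.mk.injEq]
    exact ⟨restrLE_combine i l u, restrGT_combine i l u⟩
  right_inv x := funext fun j => by by_cases h : i < j <;> simp [combine, h]

lemma sum_x_free (i : Fin n) (xle : {j : Fin n // j ≤ i} → 𝒳) (F : (Fin n → 𝒳) → ℝ) :
    ∑ x : Fin n → 𝒳, (if (fun j : {j : Fin n // j ≤ i} => x j) = xle then F x else 0)
      = ∑ u : {j : Fin n // i < j} → 𝒳, F (combine i xle u) := by
  rw [← (splitEquiv (X := 𝒳) i).sum_comp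
    (fun x => if (fun j : {j : Fin n // j ≤ i} => x j) = xle then F x else 0)]
  rw [Fintype.sum_prod_type]
  simp only [splitEquiv, Equiv.coe_fn_mk, restrLE_combine]
  rw [Finset.sum_comm]
  simp [Finset.sum_ite_eq']

lemma sum_x_pin (i : Fin n) (xle : {j : Fin n // j ≤ i} → 𝒳) (a : {j : Fin n // i < j} → 𝒳)
    (F : (Fin n → 𝒳) → ℝ) :
    ∑ x : Fin n → 𝒳,
        (if (fun j : {j : Fin n // i < j} => x j) = a ∧ (fun j : {j : Fin n // j ≤ i} => x j) = xle
          then F x else 0)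
      = F (combine i xle a) := by
  rw [← (splitEquiv (X := 𝒳) i).sum_comp
    (fun x => if (fun j : {j : Fin n // i < j} => x j) = a ∧ (fun j : {j : Fin n // j ≤ i} => x j) = xle then F x else 0)]
  rw [Fintype.sum_prod_type]
  simp only [splitEquiv, Equiv.coe_fn_mk, restrLE_combine, restrGT_combine]
  simp [ite_and, Finset.sum_ite_eq', Finset.sum_ite_eq]


lemma myIfCongr {α : Sort*} {P Q : Prop} {iP : Decidable P} {iQ : Decidable Q} {t e : α}
    (h : P ↔ Q) : (@ite _ P iP t e) = (@ite _ Q iQ t e) := by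
  by_cases hP : P
  · rw [if_pos hP, if_pos (h.mp hP)]
  · rw [if_neg hP, if_neg (fun hq => hP (h.mpr hq))]

def qX (q : 𝒳 × 𝒴 × 𝒵 → ℝ) (x : 𝒳) : ℝ := ∑ y, ∑ z, q (x, y, z)
def qXY (q : 𝒳 × 𝒴 × 𝒵 → ℝ) (x : 𝒳) (y : 𝒴) : ℝ := ∑ z, q (x, y, z)
def qXZ (q : 𝒳 × 𝒴 × 𝒵 → ℝ) (x : 𝒳) (z : 𝒵) : ℝ := ∑ y, q (x, y, z)

lemma markov_pt (q : 𝒳 × 𝒴 × 𝒵 → ℝ)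
    (hM : CondIndepPmf q (fun a => a.2.1) (fun a => a.1) (fun a => a.2.2)) :
    ∀ x y z, q (x, y, z) * qX q x = qXY q x y * qXZ q x z := by
  intro x y z
  have h := hM y x z
  simp only [Fintype.sum_prod_type] at h
  simp only [qX, qXY, qXZ]
  convert h using 2 <;> simp [Finset.sum_ite_eq', Finset.sum_ite_eq, ite_and, eq_comm]

lemma Gfact (q : 𝒳 × 𝒴 × 𝒵 → ℝ)
    (hM : ∀ x y z, q (x, y, z) * qX q x = qXY q x y * qXZ q x z)
    (Ry : (Fin n → 𝒴) → Prop) (Rz : (Fin n → 𝒵) → Prop) (x : Fin n → 𝒳) :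
    (∑ y, ∑ z, if Ry y ∧ Rz z then ∏ j, q (x j, y j, z j) else 0) * (∏ j, qX q (x j))
      = (∑ y, if Ry y then ∏ j, qXY q (x j) (y j) else 0) *
        (∑ z, if Rz z then ∏ j, qXZ q (x j) (z j) else 0) := by
  rw [Finset.sum_mul_sum, Finset.sum_mul]
  apply Finset.sum_congr rfl
  intro y _
  rw [Finset.sum_mul]
  apply Finset.sum_congr rfl
  intro z _
  have hprod : (∏ j, q (x j, y j, z j)) * (∏ j, qX q (x j))
      = (∏ j, qXY q (x j) (y j)) * (∏ j, qXZ q (x j) (z j)) := by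
    rw [← Finset.prod_mul_distrib, ← Finset.prod_mul_distrib]
    exact Finset.prod_congr rfl fun j _ => hM (x j) (y j) (z j)
  by_cases hy : Ry y <;> by_cases hz : Rz z <;> simp [hy, hz, hprod]

lemma Zsplit (q : 𝒳 × 𝒴 × 𝒵 → ℝ) (i : Fin n)
    (xle : {j : Fin n // j ≤ i} → 𝒳) (zgt : {j : Fin n // i < j} → 𝒵)
    (Rz : (Fin n → 𝒵) → Prop)
    (hRz : ∀ z, Rz z → ∀ j : {j : Fin n // i < j}, z j = zgt j)
    (u : {j : Fin n // i < j} → 𝒳) :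
    (∑ z, if Rz z then ∏ j, qXZ q (combine i xle u j) (z j) else 0)
      = (∏ j : {j : Fin n // i < j}, qXZ q (u j) (zgt j)) *
        (∑ z, if Rz z then
            ∏ j : {j : Fin n // ¬ i < j}, qXZ q (xle ⟨j, le_of_not_gt j.2⟩) (z j) else 0) := by
  rw [Finset.mul_sum]
  apply Finset.sum_congr rfl
  intro z _
  rw [mul_ite, mul_zero]
  split_ifs with hz
  · rw [← Fintype.prod_subtype_mul_prod_subtype (fun j => i < j)
      (fun j => qXZ q (combine i xle u j) (z j))]
    congr 1
    · exact Finset.prod_congr rfl fun j _ => by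
        rw [show combine i xle u (j : Fin n) = u j from dif_pos j.2, hRz z hz j]
    · exact Finset.prod_congr rfl fun j _ => by
        rw [show combine i xle u (j : Fin n) = xle ⟨j, le_of_not_gt j.2⟩ from dif_neg j.2]
  · rfl

lemma Gzero (q : 𝒳 × 𝒴 × 𝒵 → ℝ) (hq0 : ∀ a, 0 ≤ q a) (x : Fin n → 𝒳)
    (h : (∏ j, qX q (x j)) = 0) (Ry : (Fin n → 𝒴) → Prop) (Rz : (Fin n → 𝒵) → Prop) :
    (∑ y, ∑ z, if Ry y ∧ Rz z then ∏ j, q (x j, y j, z j) else 0) = 0 := by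
  obtain ⟨j, -, hj⟩ := Finset.prod_eq_zero_iff.mp h
  have hq' : ∀ y z, q (x j, y, z) = 0 := by
    intro y z
    have h1 : ∀ y' ∈ (univ : Finset 𝒴), (∑ z', q (x j, y', z')) = 0 :=
      (Finset.sum_eq_zero_iff_of_nonneg fun y' _ =>
        Finset.sum_nonneg fun z' _ => hq0 _).mp hj
    exact (Finset.sum_eq_zero_iff_of_nonneg fun z' _ => hq0 _).mp (h1 y (mem_univ y)) z (mem_univ z)
  apply Finset.sum_eq_zero; intro y _
  apply Finset.sum_eq_zero; intro z _
  split_ifs with hR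
  · exact Finset.prod_eq_zero (mem_univ j) (hq' (y j) (z j))
  · rfl

noncomputable def GG (q : 𝒳 × 𝒴 × 𝒵 → ℝ) (i : Fin n) (xle : {j : Fin n // j ≤ i} → 𝒳)
    (Ry : (Fin n → 𝒴) → Prop) (Rz : (Fin n → 𝒵) → Prop)
    (w : {j : Fin n // i < j} → 𝒳) : ℝ :=
  ∑ y, ∑ z, if Ry y ∧ Rz z then ∏ j, q (combine i xle w j, y j, z j) else 0

lemma key (q : 𝒳 × 𝒴 × 𝒵 → ℝ) (hq0 : ∀ a, 0 ≤ q a)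
    (hM : ∀ x y z, q (x, y, z) * qX q x = qXY q x y * qXZ q x z)
    (i : Fin n) (xle : {j : Fin n // j ≤ i} → 𝒳) (zgt : {j : Fin n // i < j} → 𝒵)
    (Ry : (Fin n → 𝒴) → Prop) (Rz Rzc : (Fin n → 𝒵) → Prop)
    (hRz : ∀ z, Rz z → ∀ j : {j : Fin n // i < j}, z j = zgt j)
    (hRzc : ∀ z, Rzc z → ∀ j : {j : Fin n // i < j}, z j = zgt j)
    (u v : {j : Fin n // i < j} → 𝒳) :
    GG q i xle Ry Rzc u * GG q i xle Ry Rz v = GG q i xle Ry Rz u * GG q i xle Ry Rzc v := by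
  have hzero : ∀ w, (∏ j, qX q (combine i xle w j)) = 0 →
      ∀ Rz' : (Fin n → 𝒵) → Prop, GG q i xle Ry Rz' w = 0 := fun w hw Rz' => by
    simpa only [GG] using Gzero q hq0 _ hw Ry Rz'
  by_cases hu : (∏ j, qX q (combine i xle u j)) = 0
  · rw [hzero u hu, hzero u hu, zero_mul, zero_mul]
  by_cases hv : (∏ j, qX q (combine i xle v j)) = 0
  · rw [hzero v hv, hzero v hv, mul_zero, mul_zero]
  apply mul_right_cancel₀
    (b := (∏ j, qX q (combine i xle u j)) * (∏ j, qX q (combine i xle v j)))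
    (mul_ne_zero hu hv)
  have fG : ∀ (Rz' : (Fin n → 𝒵) → Prop)
      (hRz' : ∀ z, Rz' z → ∀ j : {j : Fin n // i < j}, z j = zgt j) (w : _),
      GG q i xle Ry Rz' w * (∏ j, qX q (combine i xle w j)) =
      (∑ y, if Ry y then ∏ j, qXY q (combine i xle w j) (y j) else 0) *
      ((∏ j : {j : Fin n // i < j}, qXZ q (w j) (zgt j)) *
       (∑ z, if Rz' z then
          ∏ j : {j : Fin n // ¬ i < j}, qXZ q (xle ⟨j, le_of_not_gt j.2⟩) (z j) else 0)) := by
    intro Rz' hRz' w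
    have h1 := Gfact q hM Ry Rz' (combine i xle w)
    rw [Zsplit q i xle zgt Rz' hRz' w] at h1
    simpa only [GG] using h1
  calc GG q i xle Ry Rzc u * GG q i xle Ry Rz v *
        ((∏ j, qX q (combine i xle u j)) * (∏ j, qX q (combine i xle v j)))
      = (GG q i xle Ry Rzc u * (∏ j, qX q (combine i xle u j))) *
        (GG q i xle Ry Rz v * (∏ j, qX q (combine i xle v j))) := by ring
    _ = (GG q i xle Ry Rz u * (∏ j, qX q (combine i xle u j))) *
        (GG q i xle Ry Rzc v * (∏ j, qX q (combine i xle v j))) := by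
        rw [fG Rzc hRzc u, fG Rz hRz v, fG Rz hRz u, fG Rzc hRzc v]; ring
    _ = GG q i xle Ry Rz u * GG q i xle Ry Rzc v *
        ((∏ j, qX q (combine i xle u j)) * (∏ j, qX q (combine i xle v j))) := by ring

lemma reduce_free (q : 𝒳 × 𝒴 × 𝒵 → ℝ) (i : Fin n) (xle : {j : Fin n // j ≤ i} → 𝒳)
    (Ry : (Fin n → 𝒴) → Prop) (Rz : (Fin n → 𝒵) → Prop) :
    (∑ ω : (Fin n → 𝒳) × (Fin n → 𝒴) × (Fin n → 𝒵),
        if (fun j : {j : Fin n // j ≤ i} => ω.1 j) = xle ∧ (Ry ω.2.1 ∧ Rz ω.2.2) then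
          ∏ j, q (ω.1 j, ω.2.1 j, ω.2.2 j) else 0)
      = ∑ u, GG q i xle Ry Rz u := by
  simp only [Fintype.sum_prod_type, GG]
  have step : ∀ x : Fin n → 𝒳,
      (∑ y, ∑ z, if (fun j : {j : Fin n // j ≤ i} => x j) = xle ∧ (Ry y ∧ Rz z) then
          ∏ j, q (x j, y j, z j) else 0)
        = if (fun j : {j : Fin n // j ≤ i} => x j) = xle then
            (∑ y, ∑ z, if Ry y ∧ Rz z then ∏ j, q (x j, y j, z j) else 0) else 0 := by
    intro x
    split_ifs with hx
    · exact Finset.sum_congr rfl fun y _ => Finset.sum_congr rfl fun z _ => by simp [hx]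
    · exact Finset.sum_eq_zero fun y _ => Finset.sum_eq_zero fun z _ => by simp [hx]
  rw [Finset.sum_congr rfl fun x _ => step x]
  exact sum_x_free i xle _

lemma reduce_pin (q : 𝒳 × 𝒴 × 𝒵 → ℝ) (i : Fin n) (xle : {j : Fin n // j ≤ i} → 𝒳)
    (a : {j : Fin n // i < j} → 𝒳)
    (Ry : (Fin n → 𝒴) → Prop) (Rz : (Fin n → 𝒵) → Prop) :
    (∑ ω : (Fin n → 𝒳) × (Fin n → 𝒴) × (Fin n → 𝒵),
        if ((fun j : {j : Fin n // i < j} => ω.1 j) = a ∧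
            (fun j : {j : Fin n // j ≤ i} => ω.1 j) = xle) ∧ (Ry ω.2.1 ∧ Rz ω.2.2) then
          ∏ j, q (ω.1 j, ω.2.1 j, ω.2.2 j) else 0)
      = GG q i xle Ry Rz a := by
  simp only [Fintype.sum_prod_type, GG]
  have step : ∀ x : Fin n → 𝒳,
      (∑ y, ∑ z, if ((fun j : {j : Fin n // i < j} => x j) = a ∧
            (fun j : {j : Fin n // j ≤ i} => x j) = xle) ∧ (Ry y ∧ Rz z) then
          ∏ j, q (x j, y j, z j) else 0)
        = if (fun j : {j : Fin n // i < j} => x j) = a ∧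
            (fun j : {j : Fin n // j ≤ i} => x j) = xle then
            (∑ y, ∑ z, if Ry y ∧ Rz z then ∏ j, q (x j, y j, z j) else 0) else 0 := by
    intro x
    split_ifs with hx
    · exact Finset.sum_congr rfl fun y _ => Finset.sum_congr rfl fun z _ => by simp [hx]
    · exact Finset.sum_eq_zero fun y _ => Finset.sum_eq_zero fun z _ => by simp [hx]
  rw [Finset.sum_congr rfl fun x _ => step x]
  exact sum_x_pin i xle a _

end Stmt13


/-- For i.i.d. triples `(X_j,Y_j,Z_j) ~ q` with the single-letter Markov chain `Y - X - Z`, `T₁ = f₁(Yⁿ)` and `T₂ = f₂(Zⁿ, T₁)`, the Markov chain `X_{i+1}ⁿ - (T₁, T₂, X^i, Z_{i+1}ⁿ, Y_i) - Z_i` holds. -/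
theorem markov_stmt13
    {𝒳 𝒴 𝒵 : Type*} [Fintype 𝒳] [Fintype 𝒴] [Fintype 𝒵] {n : ℕ}
    (q : 𝒳 × 𝒴 × 𝒵 → ℝ) (hq0 : ∀ a, 0 ≤ q a) (hq1 : ∑ a, q a = 1)
    (hMarkov : CondIndepPmf q (fun a => a.2.1) (fun a => a.1) (fun a => a.2.2))
    {τ₁ τ₂ : Type*}
    (f1 : (Fin n → 𝒴) → τ₁) (f2 : (Fin n → 𝒵) → τ₁ → τ₂)
    (i : Fin n) :
    CondIndepPmf
      (fun ω : (Fin n → 𝒳) × (Fin n → 𝒴) × (Fin n → 𝒵) =>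
        ∏ j, q (ω.1 j, ω.2.1 j, ω.2.2 j))
      (fun ω => (fun j : {j : Fin n // i < j} => ω.1 j))
      (fun ω => (f1 ω.2.1, f2 ω.2.2 (f1 ω.2.1), (fun j : {j : Fin n // j ≤ i} => ω.1 j), (fun j : {j : Fin n // i < j} => ω.2.2 j), ω.2.1 i))
      (fun ω => ω.2.2 i) := by
  have hM := Stmt13.markov_pt q hMarkov
  intro a b c
  obtain ⟨t₁, t₂, xle, zgt, yi⟩ := b
  beta_reduce
  set Ry : (Fin n → 𝒴) → Prop := fun y => f1 y = t₁ ∧ y i = yi with hRy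
  set Rz : (Fin n → 𝒵) → Prop :=
    fun z => f2 z t₁ = t₂ ∧ (fun j : {j : Fin n // i < j} => z j) = zgt with hRz
  set Rzc : (Fin n → 𝒵) → Prop := fun z => Rz z ∧ z i = c with hRzc
  have hRz' : ∀ z, Rz z → ∀ j : {j : Fin n // i < j}, z j = zgt j := by
    intro z hz j
    simp only [hRz] at hz
    exact congrFun hz.2 j
  have hRzc' : ∀ z, Rzc z → ∀ j : {j : Fin n // i < j}, z j = zgt j := by
    intro z hz j
    simp only [hRzc] at hz
    exact hRz' z hz.1 j
  have iff1 : ∀ (x : Fin n → 𝒳) (y : Fin n → 𝒴) (z : Fin n → 𝒵),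
      ((fun j : {j : Fin n // i < j} => x j) = a ∧
        (f1 y, f2 z (f1 y), (fun j : {j : Fin n // j ≤ i} => x j),
          (fun j : {j : Fin n // i < j} => z j), y i) = (t₁, t₂, xle, zgt, yi) ∧ z i = c)
      ↔ (((fun j : {j : Fin n // i < j} => x j) = a ∧
          (fun j : {j : Fin n // j ≤ i} => x j) = xle) ∧ (Ry y ∧ Rzc z)) := by
    intro x y z
    simp only [hRy, hRz, hRzc, Prod.mk.injEq]
    constructor
    · rintro ⟨h1, ⟨e1, e2, e3, e4, e5⟩, h3⟩
      subst e1
      exact ⟨⟨h1, e3⟩, ⟨rfl, e5⟩, ⟨e2, e4⟩, h3⟩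
    · rintro ⟨⟨h1, h2⟩, ⟨hy1, hy2⟩, ⟨hz1, hz2⟩, h3⟩
      subst hy1
      exact ⟨h1, ⟨rfl, hz1, h2, hz2, hy2⟩, h3⟩
  have iff2 : ∀ (x : Fin n → 𝒳) (y : Fin n → 𝒴) (z : Fin n → 𝒵),
      ((f1 y, f2 z (f1 y), (fun j : {j : Fin n // j ≤ i} => x j),
          (fun j : {j : Fin n // i < j} => z j), y i) = (t₁, t₂, xle, zgt, yi))
      ↔ ((fun j : {j : Fin n // j ≤ i} => x j) = xle ∧ (Ry y ∧ Rz z)) := by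
    intro x y z
    simp only [hRy, hRz, Prod.mk.injEq]
    constructor
    · rintro ⟨e1, e2, e3, e4, e5⟩
      subst e1
      exact ⟨e3, ⟨rfl, e5⟩, e2, e4⟩
    · rintro ⟨h2, ⟨hy1, hy2⟩, hz1, hz2⟩
      subst hy1
      exact ⟨rfl, hz1, h2, hz2, hy2⟩
  have e1 : (∑ ω : (Fin n → 𝒳) × (Fin n → 𝒴) × (Fin n → 𝒵),
      if (fun j : {j : Fin n // i < j} => ω.1 j) = a ∧
          (f1 ω.2.1, f2 ω.2.2 (f1 ω.2.1), (fun j : {j : Fin n // j ≤ i} => ω.1 j),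
            (fun j : {j : Fin n // i < j} => ω.2.2 j), ω.2.1 i) = (t₁, t₂, xle, zgt, yi) ∧
          ω.2.2 i = c then ∏ j, q (ω.1 j, ω.2.1 j, ω.2.2 j) else 0)
      = Stmt13.GG q i xle Ry Rzc a := by
    rw [← Stmt13.reduce_pin q i xle a Ry Rzc]
    exact Finset.sum_congr rfl fun ω _ => Stmt13.myIfCongr (iff1 ω.1 ω.2.1 ω.2.2)
  have e2 : (∑ ω : (Fin n → 𝒳) × (Fin n → 𝒴) × (Fin n → 𝒵),
      if (f1 ω.2.1, f2 ω.2.2 (f1 ω.2.1), (fun j : {j : Fin n // j ≤ i} => ω.1 j),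
            (fun j : {j : Fin n // i < j} => ω.2.2 j), ω.2.1 i) = (t₁, t₂, xle, zgt, yi)
        then ∏ j, q (ω.1 j, ω.2.1 j, ω.2.2 j) else 0)
      = ∑ u, Stmt13.GG q i xle Ry Rz u := by
    rw [← Stmt13.reduce_free q i xle Ry Rz]
    exact Finset.sum_congr rfl fun ω _ => Stmt13.myIfCongr (iff2 ω.1 ω.2.1 ω.2.2)
  have e3 : (∑ ω : (Fin n → 𝒳) × (Fin n → 𝒴) × (Fin n → 𝒵),
      if (fun j : {j : Fin n // i < j} => ω.1 j) = a ∧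
          (f1 ω.2.1, f2 ω.2.2 (f1 ω.2.1), (fun j : {j : Fin n // j ≤ i} => ω.1 j),
            (fun j : {j : Fin n // i < j} => ω.2.2 j), ω.2.1 i) = (t₁, t₂, xle, zgt, yi)
        then ∏ j, q (ω.1 j, ω.2.1 j, ω.2.2 j) else 0)
      = Stmt13.GG q i xle Ry Rz a := by
    rw [← Stmt13.reduce_pin q i xle a Ry Rz]
    refine Finset.sum_congr rfl fun ω _ => ?_
    have h3 : ((fun j : {j : Fin n // i < j} => ω.1 j) = a ∧
        (f1 ω.2.1, f2 ω.2.2 (f1 ω.2.1), (fun j : {j : Fin n // j ≤ i} => ω.1 j),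
          (fun j : {j : Fin n // i < j} => ω.2.2 j), ω.2.1 i) = (t₁, t₂, xle, zgt, yi))
        ↔ (((fun j : {j : Fin n // i < j} => ω.1 j) = a ∧
            (fun j : {j : Fin n // j ≤ i} => ω.1 j) = xle) ∧ (Ry ω.2.1 ∧ Rz ω.2.2)) := by
      rw [iff2 ω.1 ω.2.1 ω.2.2]; tauto
    exact Stmt13.myIfCongr h3
  have e4 : (∑ ω : (Fin n → 𝒳) × (Fin n → 𝒴) × (Fin n → 𝒵),
      if (f1 ω.2.1, f2 ω.2.2 (f1 ω.2.1), (fun j : {j : Fin n // j ≤ i} => ω.1 j),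
            (fun j : {j : Fin n // i < j} => ω.2.2 j), ω.2.1 i) = (t₁, t₂, xle, zgt, yi) ∧
          ω.2.2 i = c then ∏ j, q (ω.1 j, ω.2.1 j, ω.2.2 j) else 0)
      = ∑ u, Stmt13.GG q i xle Ry Rzc u := by
    rw [← Stmt13.reduce_free q i xle Ry Rzc]
    refine Finset.sum_congr rfl fun ω _ => ?_
    have h4 : ((f1 ω.2.1, f2 ω.2.2 (f1 ω.2.1), (fun j : {j : Fin n // j ≤ i} => ω.1 j),
          (fun j : {j : Fin n // i < j} => ω.2.2 j), ω.2.1 i) = (t₁, t₂, xle, zgt, yi) ∧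
          ω.2.2 i = c)
        ↔ ((fun j : {j : Fin n // j ≤ i} => ω.1 j) = xle ∧ (Ry ω.2.1 ∧ Rzc ω.2.2)) := by
      rw [iff2 ω.1 ω.2.1 ω.2.2]; simp only [hRzc]; tauto
    exact Stmt13.myIfCongr h4
  rw [e1, e2, e3, e4, Finset.mul_sum, Finset.mul_sum]
  exact Finset.sum_congr rfl fun u _ =>
    Stmt13.key q hq0 hM i xle zgt Ry Rz Rzc hRz' hRzc' a u
end

section
/- Let (X_j, Y_j, Z_j), j = 1, ..., n, be i.i.d. triples of random variables with finite alphabets, each distributed according to a pmf p(x,y,z) satisfying the Markov chain Y - X - Z (Y and Z conditionally independent given X). Let T_1 = f_1(Y^n) and T_3 = f_3(X^n, T_1) for deterministic functions f_1 and f_3. Then for every 1 ≤ i ≤ n, the Markov chain Z_i - (T_1, T_3, X^i, Z_{i+1}^n) - X_{i+1}^n holds, i.e., Z_i and X_{i+1}^n are conditionally independent given (T_1, T_3, X^i, Z_{i+1}^n). -/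
/-!
Since the triples are i.i.d. and `Y - X - Z` holds letterwise, the joint pmf factors through
coordinate `i`, so `Z_i` is conditionally independent of `W = (Xⁿ, Yⁿ, (Z_j)_{j ≠ i})` given
`X_i`. Both the conditioning tuple `(T₁, T₃, X^i, Z_{i+1}ⁿ)` and `X_{i+1}ⁿ` are functions of `W`,
and the tuple determines `X_i`; weak union and decomposition then give the claim.
-/

open scoped Classical
open Finset

section CondIndepPmf

variable {Ω α β γ : Type*} [Fintype Ω] {P : Ω → ℝ} {A : Ω → α} {B : Ω → β} {C : Ω → γ}

lemma sum_ite_congr {p r : Ω → Prop} [DecidablePred p] [DecidablePred r] (h : ∀ ω, p ω ↔ r ω) :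
    (∑ ω, if p ω then P ω else 0) = ∑ ω, if r ω then P ω else 0 :=
  sum_congr rfl fun ω _ => if_congr (h ω) rfl rfl

lemma sum_ite_eq_zero_of_imp (hP : ∀ ω, 0 ≤ P ω) {p r : Ω → Prop} [DecidablePred p]
    [DecidablePred r] (h : ∀ ω, p ω → r ω) (hr : (∑ ω, if r ω then P ω else 0) = 0) :
    (∑ ω, if p ω then P ω else 0) = 0 := by
  refine le_antisymm (hr ▸ sum_le_sum fun ω _ => ?_) (sum_nonneg fun ω _ => ?_) <;>
    split_ifs <;> simp_all

lemma sum_fiberwise_ite [Fintype α] (f : Ω → α) (p : Ω → Prop) [DecidablePred p] :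
    ∑ a, ∑ ω, (if f ω = a ∧ p ω then P ω else 0) = ∑ ω, if p ω then P ω else 0 := by
  rw [sum_comm]
  simp [ite_and]

lemma condIndepPmf_of_eq_mul [Fintype α] [Fintype γ] (φ : α → β → ℝ) (ψ : β → γ → ℝ)
    (h : ∀ a b c, (∑ ω, if A ω = a ∧ B ω = b ∧ C ω = c then P ω else 0) = φ a b * ψ b c) :
    CondIndepPmf P A B C := by
  intro a b c
  have hAB : ∀ a, (∑ ω, if A ω = a ∧ B ω = b then P ω else 0) = φ a b * ∑ c', ψ b c' := by
    intro a
    rw [mul_sum, ← sum_fiberwise_ite C]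
    simp_rw [← h]
    simp only [and_comm, and_assoc]
  have hBC : (∑ ω, if B ω = b ∧ C ω = c then P ω else 0) = (∑ a', φ a' b) * ψ b c := by
    simp_rw [sum_mul, ← h]
    exact (sum_fiberwise_ite A _).symm
  have hB : (∑ ω, if B ω = b then P ω else 0) = (∑ a', φ a' b) * ∑ c', ψ b c' := by
    simp_rw [sum_mul, ← hAB]
    exact (sum_fiberwise_ite A _).symm
  rw [h, hB, hAB, hBC]
  ring

lemma CondIndepPmf.sum_ite_pred_mul [Fintype γ] (h : CondIndepPmf P A B C) (a : α) (b : β)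
    (S : γ → Prop) [DecidablePred S] (hS : ∀ ω, S (C ω) → B ω = b) :
    (∑ ω, if A ω = a ∧ S (C ω) then P ω else 0) * (∑ ω, if B ω = b then P ω else 0) =
      (∑ ω, if A ω = a ∧ B ω = b then P ω else 0) * ∑ ω, if S (C ω) then P ω else 0 := by
  rw [← sum_fiberwise_ite C (fun ω => A ω = a ∧ S (C ω)), ← sum_fiberwise_ite C (fun ω => S (C ω)),
    sum_mul, mul_sum]
  refine sum_congr rfl fun c _ => ?_
  by_cases hc : S c
  · convert h a b c using 2 <;> exact sum_ite_congr fun ω => by grind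
  · simp +contextual [ite_and, hc]

lemma CondIndepPmf.weak_union {χ ν : Type*} [Fintype ν] {X : Ω → χ} {W : Ω → ν}
    (hP : ∀ ω, 0 ≤ P ω) (h : CondIndepPmf P A X W) (g : β → χ) (gB : ν → β) (gC : ν → γ)
    (hX : ∀ ω, X ω = g (B ω)) (hB : ∀ ω, B ω = gB (W ω)) (hC : ∀ ω, C ω = gC (W ω)) :
    CondIndepPmf P A B C := by
  intro a b c
  have himp : ∀ ω, gB (W ω) = b → X ω = g b := fun ω hω => by rw [hX, hB, hω]
  have hbc := h.sum_ite_pred_mul a (g b) (fun w => gB w = b ∧ gC w = c) fun ω hω => himp ω hω.1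
  have hb := h.sum_ite_pred_mul a (g b) (fun w => gB w = b) himp
  simp only [hB, hC]
  by_cases hx : (∑ ω, if X ω = g b then P ω else 0) = 0
  · have hb0 := sum_ite_eq_zero_of_imp hP himp hx
    rw [hb0, sum_ite_eq_zero_of_imp (p := fun ω => A ω = a ∧ gB (W ω) = b) hP (fun _ => And.right)
      hb0, mul_zero, zero_mul]
  · refine mul_right_cancel₀ hx ?_
    linear_combination (∑ ω, if gB (W ω) = b then P ω else 0) * hbc -
      (∑ ω, if gB (W ω) = b ∧ gC (W ω) = c then P ω else 0) * hb

lemma CondIndepPmf.eq_div_mul (hP : ∀ ω, 0 ≤ P ω) (h : CondIndepPmf P A B C) (a : α) (b : β)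
    (c : γ) :
    (∑ ω, if A ω = a ∧ B ω = b ∧ C ω = c then P ω else 0) =
      (∑ ω, if A ω = a ∧ B ω = b then P ω else 0) / (∑ ω, if B ω = b then P ω else 0) *
        ∑ ω, if B ω = b ∧ C ω = c then P ω else 0 := by
  by_cases hb : (∑ ω, if B ω = b then P ω else 0) = 0
  · rw [sum_ite_eq_zero_of_imp hP (fun ω hω => hω.2.1) hb, hb, div_zero, zero_mul]
  · rw [div_mul_eq_mul_div, eq_div_iff hb]
    exact h a b c

end CondIndepPmf

lemma prod_funSplitAt_symm {ι β M : Type*} [Fintype ι] [DecidableEq ι] [CommMonoid M]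
    (f : ι → β → M) (i : ι) (a : β) (z : {j // j ≠ i} → β) :
    ∏ j, f j ((Equiv.funSplitAt i β).symm (a, z) j) = f i a * ∏ j : {j // j ≠ i}, f j (z j) := by
  rw [Fintype.prod_eq_mul_prod_subtype_ne _ i]
  congr 1
  · simp
  · exact prod_congr rfl fun j _ => by simp [j.2]

section Iid

variable {ι 𝒳 𝒴 𝒵 : Type*} [DecidableEq ι]

lemma coord_and_rest_eq_iff (i : ι) (a : 𝒵) (x : 𝒳) (ω : (ι → 𝒳) × (ι → 𝒴) × (ι → 𝒵))
    (w : (ι → 𝒳) × (ι → 𝒴) × ({j // j ≠ i} → 𝒵)) :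
    (ω.2.2 i = a ∧ ω.1 i = x ∧ (ω.1, ω.2.1, fun j : {j // j ≠ i} => ω.2.2 j) = w) ↔
      ω = (w.1, w.2.1, (Equiv.funSplitAt i 𝒵).symm (a, w.2.2)) ∧ w.1 i = x := by
  obtain ⟨ωx, ωy, ωz⟩ := ω
  obtain ⟨wx, wy, wz⟩ := w
  simp [Equiv.eq_symm_apply, Prod.ext_iff]
  grind

variable [Fintype 𝒳] [Fintype 𝒴] [Fintype 𝒵]

lemma sum_ite_triple_eq_apply (q : 𝒳 × 𝒴 × 𝒵 → ℝ) (x : 𝒳) (y : 𝒴) (z : 𝒵) :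
    (∑ s : 𝒳 × 𝒴 × 𝒵, if s.2.1 = y ∧ s.1 = x ∧ s.2.2 = z then q s else 0) = q (x, y, z) := by
  rw [sum_ite_congr (r := fun s => s = (x, y, z)) fun s => by grind, Fintype.sum_ite_eq']

lemma condIndepPmf_iid_coord [Fintype ι] (q : 𝒳 × 𝒴 × 𝒵 → ℝ) (hq0 : ∀ s, 0 ≤ q s)
    (hM : CondIndepPmf q (fun s => s.2.1) (fun s => s.1) (fun s => s.2.2)) (i : ι) :
    CondIndepPmf (fun ω : (ι → 𝒳) × (ι → 𝒴) × (ι → 𝒵) => ∏ j, q (ω.1 j, ω.2.1 j, ω.2.2 j))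
      (fun ω => ω.2.2 i) (fun ω => ω.1 i)
      (fun ω => (ω.1, ω.2.1, fun j : {j // j ≠ i} => ω.2.2 j)) := by
  have hq := fun x y z => (sum_ite_triple_eq_apply q x y z).symm.trans (hM.eq_div_mul hq0 y x z)
  refine condIndepPmf_of_eq_mul (fun a x => ∑ s, if s.1 = x ∧ s.2.2 = a then q s else 0)
    (fun x w => if w.1 i = x then
      (∑ s, if s.2.1 = w.2.1 i ∧ s.1 = x then q s else 0) / (∑ s, if s.1 = x then q s else 0) *
        ∏ j : {j // j ≠ i}, q (w.1 j, w.2.1 j, w.2.2 j) else 0) fun a x w => ?_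
  conv_lhs => simp only [coord_and_rest_eq_iff, ite_and, Fintype.sum_ite_eq']
  rw [prod_funSplitAt_symm (fun j s => q (w.1 j, w.2.1 j, s)), mul_ite, mul_zero]
  split_ifs with h
  · rw [h, hq]
    ring
  · rfl

end Iid

theorem markov_stmt15_general
    {𝒳 𝒴 𝒵 : Type*} [Fintype 𝒳] [Fintype 𝒴] [Fintype 𝒵] {n : ℕ}
    (q : 𝒳 × 𝒴 × 𝒵 → ℝ) (hq0 : ∀ a, 0 ≤ q a)
    (hMarkov : CondIndepPmf q (fun a => a.2.1) (fun a => a.1) (fun a => a.2.2))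
    {τ₁ τ₃ : Type*}
    (f1 : (Fin n → 𝒴) → τ₁) (f3 : (Fin n → 𝒳) → τ₁ → τ₃)
    (i : Fin n) :
    CondIndepPmf
      (fun ω : (Fin n → 𝒳) × (Fin n → 𝒴) × (Fin n → 𝒵) =>
        ∏ j, q (ω.1 j, ω.2.1 j, ω.2.2 j))
      (fun ω => ω.2.2 i)
      (fun ω => (f1 ω.2.1, f3 ω.1 (f1 ω.2.1), (fun j : {j : Fin n // j ≤ i} => ω.1 j), (fun j : {j : Fin n // i < j} => ω.2.2 j)))
      (fun ω => (fun j : {j : Fin n // i < j} => ω.1 j)) :=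
  (condIndepPmf_iid_coord q hq0 hMarkov i).weak_union (fun _ => prod_nonneg fun _ _ => hq0 _)
    (fun b => b.2.2.1 ⟨i, le_rfl⟩)
    (fun w => (f1 w.2.1, f3 w.1 (f1 w.2.1), fun j => w.1 j, fun j => w.2.2 ⟨j, j.2.ne'⟩))
    (fun w j => w.1 j) (fun _ => rfl) (fun _ => rfl) (fun _ => rfl)

/-- For i.i.d. triples `(X_j,Y_j,Z_j) ~ q` with the single-letter Markov chain `Y - X - Z`, `T₁ = f₁(Yⁿ)` and `T₃ = f₃(Xⁿ, T₁)`, the Markov chain `Z_i - (T₁, T₃, X^i, Z_{i+1}ⁿ) - X_{i+1}ⁿ` holds. -/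
theorem markov_stmt15
    {𝒳 𝒴 𝒵 : Type*} [Fintype 𝒳] [Fintype 𝒴] [Fintype 𝒵] {n : ℕ}
    (q : 𝒳 × 𝒴 × 𝒵 → ℝ) (hq0 : ∀ a, 0 ≤ q a) (hq1 : ∑ a, q a = 1)
    (hMarkov : CondIndepPmf q (fun a => a.2.1) (fun a => a.1) (fun a => a.2.2))
    {τ₁ τ₃ : Type*}
    (f1 : (Fin n → 𝒴) → τ₁) (f3 : (Fin n → 𝒳) → τ₁ → τ₃)
    (i : Fin n) :
    CondIndepPmf
      (fun ω : (Fin n → 𝒳) × (Fin n → 𝒴) × (Fin n → 𝒵) =>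
        ∏ j, q (ω.1 j, ω.2.1 j, ω.2.2 j))
      (fun ω => ω.2.2 i)
      (fun ω => (f1 ω.2.1, f3 ω.1 (f1 ω.2.1), (fun j : {j : Fin n // j ≤ i} => ω.1 j), (fun j : {j : Fin n // i < j} => ω.2.2 j)))
      (fun ω => (fun j : {j : Fin n // i < j} => ω.1 j)) :=
  markov_stmt15_general q hq0 hMarkov f1 f3 i
end
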